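/- arXiv:2304.07045 — 2 statements merged into one kernel-verified Lean document; each statement's English description precedes it below -/
import Mathlib

section
/- Let n ≥ 2 and suppose δ_n² > 0. Among all estimators of the form Σ̂ = ρ₁ I + ρ₂ S_n with nonrandom scalar coefficients ρ₁, ρ₂, the expected loss E[‖Σ̂ − Σ_n‖_n²] is uniquely minimized by Σ_n* = (β_n²/δ_n²) μ_n I + (α_n²/δ_n²) S_n, and the minimal value is E[‖Σ_n* − Σ_n‖_n²] = α_n² β_n² / δ_n². (Here one uses that E[S_n] = Σ_n and α_n² + β_n² = δ_n².) -/
open MeasureTheory ProbabilityTheory Matrix Filter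
open scoped Topology

noncomputable section

namespace LW

variable {Ω : Type*} [MeasurableSpace Ω]

/-- The Borel/product measurable structure on matrices. -/
instance {pn n : ℕ} : MeasurableSpace (Matrix (Fin pn) (Fin n) ℝ) :=
  inferInstanceAs (MeasurableSpace (Fin pn → Fin n → ℝ))

/-- Normalized Frobenius inner product `⟨A,B⟩ₙ = tr(A Bᵀ)/p`. -/
def inp {pn : ℕ} (A B : Matrix (Fin pn) (Fin pn) ℝ) : ℝ :=
  (A * Bᵀ).trace / pn

/-- Normalized Frobenius norm `‖A‖ₙ = √(tr(A Aᵀ)/p)`. -/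
def nrm {pn : ℕ} (A : Matrix (Fin pn) (Fin pn) ℝ) : ℝ :=
  Real.sqrt ((A * Aᵀ).trace / pn)

/-- Column-centered data matrix `x̃_{·k} = x_{·k} - (1/n) ∑_{k'} x_{·k'}`. -/
def ctr {pn n : ℕ} (X : Matrix (Fin pn) (Fin n) ℝ) : Matrix (Fin pn) (Fin n) ℝ :=
  Matrix.of fun i k => X i k - (∑ k', X i k') / n

/-- Sample covariance `S = X̃ X̃ᵀ/(n-1)`. -/
def sampleCov {pn n : ℕ} (X : Matrix (Fin pn) (Fin n) ℝ) : Matrix (Fin pn) (Fin pn) ℝ :=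
  ((n : ℝ) - 1)⁻¹ • (ctr X * (ctr X)ᵀ)

/-- Centered outer product `x̃_{·k} x̃_{·k}ᵀ`. -/
def outerC {pn n : ℕ} (X : Matrix (Fin pn) (Fin n) ℝ) (k : Fin n) :
    Matrix (Fin pn) (Fin pn) ℝ :=
  Matrix.of fun i j => ctr X i k * ctr X j k

/-- Covariance of two real random variables. -/
def covP (P : Measure Ω) (f g : Ω → ℝ) : ℝ :=
  (∫ ω, f ω * g ω ∂P) - (∫ ω, f ω ∂P) * (∫ ω, g ω ∂P)

/-- Variance `Var[f] = E[(f - E f)²]`. -/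
def varP (P : Measure Ω) (f : Ω → ℝ) : ℝ :=
  ∫ ω, (f ω - ∫ ω', f ω' ∂P) ^ 2 ∂P

/-- `μₙ = ⟨Σ, I⟩ₙ`. -/
def muS {pn : ℕ} (Sig : Matrix (Fin pn) (Fin pn) ℝ) : ℝ := inp Sig 1

/-- `αₙ² = ‖Σ − μ I‖ₙ²`. -/
def alpha2 {pn : ℕ} (Sig : Matrix (Fin pn) (Fin pn) ℝ) : ℝ := nrm (Sig - muS Sig • 1) ^ 2

/-- `βₙ² = E[‖S − Σ‖ₙ²]`. -/
def beta2 (P : Measure Ω) {pn n : ℕ} (X : Ω → Matrix (Fin pn) (Fin n) ℝ)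
    (Sig : Matrix (Fin pn) (Fin pn) ℝ) : ℝ :=
  ∫ ω, nrm (sampleCov (X ω) - Sig) ^ 2 ∂P

/-- `δₙ² = E[‖S − μ I‖ₙ²]`. -/
def delta2 (P : Measure Ω) {pn n : ℕ} (X : Ω → Matrix (Fin pn) (Fin n) ℝ)
    (Sig : Matrix (Fin pn) (Fin pn) ℝ) : ℝ :=
  ∫ ω, nrm (sampleCov (X ω) - muS Sig • 1) ^ 2 ∂P

/-- `mₙ = ⟨S, I⟩ₙ`. -/
def mE {pn n : ℕ} (X : Ω → Matrix (Fin pn) (Fin n) ℝ) (ω : Ω) : ℝ :=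
  inp (sampleCov (X ω)) 1

/-- `dₙ² = ‖S − mₙ I‖ₙ²`. -/
def d2E {pn n : ℕ} (X : Ω → Matrix (Fin pn) (Fin n) ℝ) (ω : Ω) : ℝ :=
  nrm (sampleCov (X ω) - mE X ω • 1) ^ 2

/-- `b̄ₙ² = (1/n²) ∑ₖ ‖(n/(n−1)) x̃ₖ x̃ₖᵀ − S‖ₙ²`. -/
def bbar2E {pn n : ℕ} (X : Ω → Matrix (Fin pn) (Fin n) ℝ) (ω : Ω) : ℝ :=
  (1 / (n : ℝ) ^ 2) *
    ∑ k : Fin n, nrm (((n : ℝ) / ((n : ℝ) - 1)) • outerC (X ω) k - sampleCov (X ω)) ^ 2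

def gammaC (n : ℕ) : ℝ := ((n : ℝ) * ((n : ℝ) - 1)) / ((n : ℝ) ^ 2 - 3 * (n : ℝ) + 3)
def lambdaC (n : ℕ) : ℝ :=
  ((n : ℝ) ^ 2 * ((n : ℝ) - 2)) / (((n : ℝ) - 1) * ((n : ℝ) ^ 2 - 3 * (n : ℝ) + 3))
def c0 (n : ℕ) : ℝ := 1 / gammaC n - 1 / (n : ℝ) - lambdaC n / (gammaC n * (n : ℝ) ^ 2)
def c1 (n : ℕ) : ℝ := lambdaC n / (gammaC n * (n : ℝ) ^ 2)
def c2 (pn n : ℕ) : ℝ := ((pn : ℝ) + 1) * c1 n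
def q0 (pn n : ℕ) : ℝ := ((n : ℝ) - 2) / ((pn : ℝ) * ((n : ℝ) - 1))
def q1 (pn n : ℕ) : ℝ := 1 / ((pn : ℝ) * ((n : ℝ) - 1))
def q2 (pn n : ℕ) : ℝ := ((pn : ℝ) - 1) / ((pn : ℝ) * ((n : ℝ) - 1))
def c0f (pn n : ℕ) : ℝ := c0 n + (c1 n - c2 pn n) * q0 pn n / (1 - q1 pn n - q2 pn n)
def c1f (pn n : ℕ) : ℝ := c1 n + (c1 n - c2 pn n) * q1 pn n / (1 - q1 pn n - q2 pn n)
def c2f (pn n : ℕ) : ℝ := c2 pn n - (c1 n - c2 pn n) * q2 pn n / (1 - q1 pn n - q2 pn n)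

/-- `bₙ² = (b̄ₙ² − c₁^f dₙ² − c₂^f mₙ²)/c₀^f`. -/
def b2E {pn n : ℕ} (X : Ω → Matrix (Fin pn) (Fin n) ℝ) (ω : Ω) : ℝ :=
  (bbar2E X ω - c1f pn n * d2E X ω - c2f pn n * (mE X ω) ^ 2) / c0f pn n

/-- `b_{n,u}² = min(max(bₙ², 0), dₙ²)`. -/
def b2uE {pn n : ℕ} (X : Ω → Matrix (Fin pn) (Fin n) ℝ) (ω : Ω) : ℝ :=
  min (max (b2E X ω) 0) (d2E X ω)

/-- `a_{n,u}² = dₙ² − b_{n,u}²`. -/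
def a2uE {pn n : ℕ} (X : Ω → Matrix (Fin pn) (Fin n) ℝ) (ω : Ω) : ℝ :=
  d2E X ω - b2uE X ω

/-- Translation-invariant linear shrinkage estimator `Sₙ*`. -/
def SstarU {pn n : ℕ} (X : Ω → Matrix (Fin pn) (Fin n) ℝ) (ω : Ω) :
    Matrix (Fin pn) (Fin pn) ℝ :=
  (b2uE X ω / d2E X ω) • (mE X ω • (1 : Matrix (Fin pn) (Fin pn) ℝ)) +
    (a2uE X ω / d2E X ω) • sampleCov (X ω)

/-- Oracle `Σₙ* = (βₙ²/δₙ²) μₙ I + (αₙ²/δₙ²) Sₙ`. -/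
def SigmaStar (P : Measure Ω) {pn n : ℕ} (X : Ω → Matrix (Fin pn) (Fin n) ℝ)
    (Sig : Matrix (Fin pn) (Fin pn) ℝ) (ω : Ω) : Matrix (Fin pn) (Fin pn) ℝ :=
  (beta2 P X Sig / delta2 P X Sig) • (muS Sig • (1 : Matrix (Fin pn) (Fin pn) ℝ)) +
    (alpha2 Sig / delta2 P X Sig) • sampleCov (X ω)

/-- `Σₙ** = μₙ I + ((⟨S,Σ⟩ₙ − mₙ μₙ)/dₙ²)(S − mₙ I)`. -/
def SigmaStarStar {pn n : ℕ} (X : Ω → Matrix (Fin pn) (Fin n) ℝ)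
    (Sig : Matrix (Fin pn) (Fin pn) ℝ) (ω : Ω) : Matrix (Fin pn) (Fin pn) ℝ :=
  muS Sig • (1 : Matrix (Fin pn) (Fin pn) ℝ) +
    ((inp (sampleCov (X ω)) Sig - mE X ω * muS Sig) / d2E X ω) •
      (sampleCov (X ω) - mE X ω • 1)

/-- Ledoit–Wolf recommended `b̄_{n,r}² = (1/(n−1)²) ∑ₖ ‖x̃ₖ x̃ₖᵀ − S‖ₙ²`. -/
def bbar2rE {pn n : ℕ} (X : Ω → Matrix (Fin pn) (Fin n) ℝ) (ω : Ω) : ℝ :=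
  (1 / ((n : ℝ) - 1) ^ 2) * ∑ k : Fin n, nrm (outerC (X ω) k - sampleCov (X ω)) ^ 2

def b2rE {pn n : ℕ} (X : Ω → Matrix (Fin pn) (Fin n) ℝ) (ω : Ω) : ℝ :=
  min (max (bbar2rE X ω) 0) (d2E X ω)

def a2rE {pn n : ℕ} (X : Ω → Matrix (Fin pn) (Fin n) ℝ) (ω : Ω) : ℝ :=
  d2E X ω - b2rE X ω

def SstarR {pn n : ℕ} (X : Ω → Matrix (Fin pn) (Fin n) ℝ) (ω : Ω) :
    Matrix (Fin pn) (Fin pn) ℝ :=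
  (b2rE X ω / d2E X ω) • (mE X ω • (1 : Matrix (Fin pn) (Fin pn) ℝ)) +
    (a2rE X ω / d2E X ω) • sampleCov (X ω)

def b2mE {pn n : ℕ} (X : Ω → Matrix (Fin pn) (Fin n) ℝ) (ω : Ω) : ℝ :=
  min (max (bbar2E X ω) 0) (d2E X ω)

def a2mE {pn n : ℕ} (X : Ω → Matrix (Fin pn) (Fin n) ℝ) (ω : Ω) : ℝ :=
  d2E X ω - b2mE X ω

def SstarM {pn n : ℕ} (X : Ω → Matrix (Fin pn) (Fin n) ℝ) (ω : Ω) :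
    Matrix (Fin pn) (Fin pn) ℝ :=
  (b2mE X ω / d2E X ω) • (mE X ω • (1 : Matrix (Fin pn) (Fin pn) ℝ)) +
    (a2mE X ω / d2E X ω) • sampleCov (X ω)

def mSE {pn n : ℕ} (X : Ω → Matrix (Fin pn) (Fin n) ℝ) (ω : Ω) : ℝ :=
  (((n : ℝ) - 1) / n) * mE X ω

def a2sE {pn n : ℕ} (X : Ω → Matrix (Fin pn) (Fin n) ℝ) (ω : Ω) : ℝ :=
  (((n : ℝ) - 1) / n) * (d2E X ω - b2mE X ω)

def SstarS {pn n : ℕ} (X : Ω → Matrix (Fin pn) (Fin n) ℝ) (ω : Ω) :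
    Matrix (Fin pn) (Fin pn) ℝ :=
  (((n : ℝ) - 1) / n) • SstarM X ω

/-- The quantity in Assumption 3:
`(pₙ²/n) · (∑_{(i,j,k,l)∈Qₙ} Cov[y_{i1}y_{j1}, y_{k1}y_{l1}]²) / |Qₙ|`. -/
def A3quant (P : Measure Ω) (p : ℕ → ℕ) (Γ : ∀ n, Matrix (Fin (p n)) (Fin (p n)) ℝ)
    (X : ∀ n, Ω → Matrix (Fin (p n)) (Fin n) ℝ) (n : ℕ) : ℝ :=
  if hn : 0 < n then
    (let y : Fin (p n) → Ω → ℝ := fun i ω => ((Γ n)ᵀ * X n ω) i ⟨0, hn⟩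
     let Q : Finset (Fin (p n) × Fin (p n) × Fin (p n) × Fin (p n)) :=
       Finset.univ.filter fun q =>
         q.1 ≠ q.2.1 ∧ q.1 ≠ q.2.2.1 ∧ q.1 ≠ q.2.2.2 ∧
           q.2.1 ≠ q.2.2.1 ∧ q.2.1 ≠ q.2.2.2 ∧ q.2.2.1 ≠ q.2.2.2
     ((p n : ℝ) ^ 2 / n) *
       ((∑ q ∈ Q, (covP P (fun ω => y q.1 ω * y q.2.1 ω)
           (fun ω => y q.2.2.1 ω * y q.2.2.2 ω)) ^ 2) / Q.card))
  else 0

/-- `θₙ² = Var[(1/pₙ) ∑ᵢ y_{i1}²]`. -/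
def theta2 (P : Measure Ω) (p : ℕ → ℕ) (Γ : ∀ n, Matrix (Fin (p n)) (Fin (p n)) ℝ)
    (X : ∀ n, Ω → Matrix (Fin (p n)) (Fin n) ℝ) (n : ℕ) : ℝ :=
  if hn : 0 < n then
    varP P (fun ω => (∑ i, (((Γ n)ᵀ * X n ω) i ⟨0, hn⟩) ^ 2) / p n)
  else 0

/-!
Since `E[S] = Σ`, the cross term vanishes in `E‖ρ₂(S - Σ) + C‖²` for every deterministic `C`.
Writing `ρ₁I + ρ₂S - Σ = ρ₂(S - Σ) + (ρ₁ + (ρ₂ - 1)μ)I + (ρ₂ - 1)(Σ - μI)` and using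
`I ⟂ Σ - μI`, the risk becomes `(ρ₁ + (ρ₂ - 1)μ)² + (ρ₂ - 1)²α² + ρ₂²β²`; the same splitting
gives `δ² = α² + β²`. Completing the square in `ρ₂` rewrites the risk as
`α²β²/δ² + (ρ₁ + (ρ₂ - 1)μ)² + δ²(ρ₂ - α²/δ²)²`, which is minimal exactly at `Σ*`.
-/

section FrobeniusGeometry

variable {p : ℕ}

lemma inp_eq_sum (A B : Matrix (Fin p) (Fin p) ℝ) :
    inp A B = (∑ i, ∑ j, A i j * B i j) / p := by
  simp [inp, Matrix.trace, Matrix.mul_apply]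

lemma nrm_sq_eq_sum (A : Matrix (Fin p) (Fin p) ℝ) :
    nrm A ^ 2 = (∑ i, ∑ j, A i j ^ 2) / p := by
  have h := inp_eq_sum A A
  simp only [inp, ← sq] at h
  rw [nrm, h, Real.sq_sqrt (by positivity)]

lemma nrm_sq_eq_inp (A : Matrix (Fin p) (Fin p) ℝ) : nrm A ^ 2 = inp A A := by
  rw [nrm_sq_eq_sum, inp_eq_sum]
  simp only [sq]

lemma nrm_add_sq (A B : Matrix (Fin p) (Fin p) ℝ) :
    nrm (A + B) ^ 2 = nrm A ^ 2 + 2 * inp A B + nrm B ^ 2 := by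
  simp only [nrm_sq_eq_sum, inp_eq_sum, Matrix.add_apply, add_sq, Finset.sum_add_distrib,
    mul_assoc, ← Finset.mul_sum]
  ring

lemma nrm_smul_sq (c : ℝ) (A : Matrix (Fin p) (Fin p) ℝ) :
    nrm (c • A) ^ 2 = c ^ 2 * nrm A ^ 2 := by
  simp only [nrm_sq_eq_sum, Matrix.smul_apply, smul_eq_mul, mul_pow, ← Finset.mul_sum]
  ring

lemma inp_smul_left (c : ℝ) (A B : Matrix (Fin p) (Fin p) ℝ) :
    inp (c • A) B = c * inp A B := by
  simp only [inp_eq_sum, Matrix.smul_apply, smul_eq_mul, mul_assoc, ← Finset.mul_sum]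
  ring

lemma inp_comm (A B : Matrix (Fin p) (Fin p) ℝ) : inp A B = inp B A := by
  simp only [inp_eq_sum, mul_comm (A _ _)]

lemma inp_one_one (hp : p ≠ 0) : inp (1 : Matrix (Fin p) (Fin p) ℝ) 1 = 1 := by
  simp [inp_eq_sum, Matrix.one_apply, hp]

lemma inp_sub_muS_smul_one (hp : p ≠ 0) (Sig : Matrix (Fin p) (Fin p) ℝ) :
    inp (Sig - muS Sig • 1) 1 = 0 := by
  have hsub : inp (Sig - muS Sig • 1) 1 =
      inp Sig 1 - muS Sig * inp (1 : Matrix (Fin p) (Fin p) ℝ) 1 := by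
    simp only [inp_eq_sum, Matrix.sub_apply, Matrix.smul_apply, smul_eq_mul, sub_mul,
      Finset.sum_sub_distrib, mul_assoc, ← Finset.mul_sum]
    ring
  rw [hsub, inp_one_one hp, muS]
  ring

lemma nrm_smul_one_add_smul_sq (hp : p ≠ 0) {D : Matrix (Fin p) (Fin p) ℝ} (hD : inp D 1 = 0)
    (t s : ℝ) :
    nrm (t • (1 : Matrix (Fin p) (Fin p) ℝ) + s • D) ^ 2 = t ^ 2 + s ^ 2 * nrm D ^ 2 := by
  rw [nrm_add_sq, nrm_smul_sq, nrm_smul_sq, inp_smul_left, inp_comm, inp_smul_left, hD,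
    nrm_sq_eq_inp 1, inp_one_one hp]
  ring

end FrobeniusGeometry

def shrinkageRisk (μ α β ρ1 ρ2 : ℝ) : ℝ :=
  (ρ1 + (ρ2 - 1) * μ) ^ 2 + (ρ2 - 1) ^ 2 * α + ρ2 ^ 2 * β

lemma shrinkageRisk_eq_add_sq {μ α β : ℝ} (h : α + β ≠ 0) (ρ1 ρ2 : ℝ) :
    shrinkageRisk μ α β ρ1 ρ2 =
      α * β / (α + β) + ((ρ1 + (ρ2 - 1) * μ) ^ 2 + (α + β) * (ρ2 - α / (α + β)) ^ 2) := by
  rw [shrinkageRisk]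
  field_simp
  ring

lemma shrinkageRisk_oracle {μ α β : ℝ} (h : α + β ≠ 0) :
    shrinkageRisk μ α β (β / (α + β) * μ) (α / (α + β)) = α * β / (α + β) := by
  rw [shrinkageRisk_eq_add_sq h]
  field_simp
  ring

lemma le_shrinkageRisk {μ α β : ℝ} (h : 0 < α + β) (ρ1 ρ2 : ℝ) :
    α * β / (α + β) ≤ shrinkageRisk μ α β ρ1 ρ2 := by
  rw [shrinkageRisk_eq_add_sq h.ne']
  exact le_add_of_nonneg_right (add_nonneg (sq_nonneg _) (mul_nonneg h.le (sq_nonneg _)))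

lemma eq_oracle_of_shrinkageRisk_eq {μ α β ρ1 ρ2 : ℝ} (h : 0 < α + β)
    (hρ : shrinkageRisk μ α β ρ1 ρ2 = α * β / (α + β)) :
    ρ1 = β / (α + β) * μ ∧ ρ2 = α / (α + β) := by
  rw [shrinkageRisk_eq_add_sq h.ne', add_eq_left] at hρ
  obtain ⟨hρ1, hρ2⟩ := (add_eq_zero_iff_of_nonneg (sq_nonneg _)
    (mul_nonneg h.le (sq_nonneg _))).mp hρ
  have hρ2 : ρ2 = α / (α + β) :=
    sub_eq_zero.mp (pow_eq_zero_iff two_ne_zero |>.mp ((mul_eq_zero.mp hρ2).resolve_left h.ne'))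
  refine ⟨?_, hρ2⟩
  replace hρ1 := pow_eq_zero_iff two_ne_zero |>.mp hρ1
  rw [hρ2] at hρ1
  field_simp at hρ1 ⊢
  linarith

section UnbiasedEstimator

variable {P : Measure Ω} {p : ℕ}

lemma integrable_nrm_sq {M : Ω → Matrix (Fin p) (Fin p) ℝ}
    (hM : ∀ i j, MemLp (fun ω => M ω i j) 2 P) : Integrable (fun ω => nrm (M ω) ^ 2) P := by
  simp only [nrm_sq_eq_sum]
  exact (integrable_finsetSum _ fun i _ =>
    integrable_finsetSum _ fun j _ => (hM i j).integrable_sq).div_const _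

lemma integrable_inp_left {M : Ω → Matrix (Fin p) (Fin p) ℝ}
    (hM : ∀ i j, Integrable (fun ω => M ω i j) P) (C : Matrix (Fin p) (Fin p) ℝ) :
    Integrable (fun ω => inp (M ω) C) P := by
  simp only [inp_eq_sum]
  exact (integrable_finsetSum _ fun i _ =>
    integrable_finsetSum _ fun j _ => (hM i j).mul_const _).div_const _

lemma integral_inp_left {M : Ω → Matrix (Fin p) (Fin p) ℝ}
    (hM : ∀ i j, Integrable (fun ω => M ω i j) P) (C : Matrix (Fin p) (Fin p) ℝ) :
    ∫ ω, inp (M ω) C ∂P = inp (Matrix.of fun i j => ∫ ω, M ω i j ∂P) C := by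
  simp only [inp_eq_sum, Matrix.of_apply]
  rw [integral_div, integral_finsetSum (f := fun i ω => ∑ j, M ω i j * C i j) _ fun i _ =>
    integrable_finsetSum _ fun j _ => (hM i j).mul_const _]
  congr 1
  refine Finset.sum_congr rfl fun i _ => ?_
  rw [integral_finsetSum (f := fun j ω => M ω i j * C i j) _ fun j _ => (hM i j).mul_const _]
  simp only [integral_mul_const]

variable [IsProbabilityMeasure P] {S : Ω → Matrix (Fin p) (Fin p) ℝ}
  {Sig : Matrix (Fin p) (Fin p) ℝ}

lemma integral_nrm_smul_sub_add_sq (hS : ∀ i j, MemLp (fun ω => S ω i j) 2 P)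
    (hES : ∀ i j, ∫ ω, S ω i j ∂P = Sig i j) (a : ℝ) (C : Matrix (Fin p) (Fin p) ℝ) :
    ∫ ω, nrm (a • (S ω - Sig) + C) ^ 2 ∂P = a ^ 2 * ∫ ω, nrm (S ω - Sig) ^ 2 ∂P + nrm C ^ 2 := by
  have hB : ∀ i j, MemLp (fun ω => (S ω - Sig) i j) 2 P :=
    fun i j => (hS i j).sub (memLp_const _)
  have hB1 : ∀ i j, Integrable (fun ω => (S ω - Sig) i j) P :=
    fun i j => (hB i j).integrable one_le_two
  have hcross : ∫ ω, inp (S ω - Sig) C ∂P = 0 := by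
    have hB0 : ∀ i j, ∫ ω, (S ω i j - Sig i j) ∂P = 0 := fun i j => by
      rw [integral_sub ((hS i j).integrable one_le_two) (integrable_const _), hES]
      simp
    rw [integral_inp_left hB1]
    simp [hB0, inp_eq_sum]
  have hsq := integrable_nrm_sq hB
  have hinp := integrable_inp_left hB1 C
  simp only [nrm_add_sq, nrm_smul_sq, inp_smul_left]
  rw [integral_add, integral_add, integral_const_mul, integral_const_mul, integral_const_mul,
    hcross]
  · simp
  exacts [hsq.const_mul _, (hinp.const_mul a).const_mul 2,
    (hsq.const_mul _).add ((hinp.const_mul a).const_mul 2), integrable_const _]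

lemma integral_nrm_sub_muS_sq (hS : ∀ i j, MemLp (fun ω => S ω i j) 2 P)
    (hES : ∀ i j, ∫ ω, S ω i j ∂P = Sig i j) :
    ∫ ω, nrm (S ω - muS Sig • 1) ^ 2 ∂P = alpha2 Sig + ∫ ω, nrm (S ω - Sig) ^ 2 ∂P := by
  have h := integral_nrm_smul_sub_add_sq hS hES 1 (Sig - muS Sig • 1)
  simp only [one_smul, sub_add_sub_cancel, one_pow, one_mul] at h
  rw [h, alpha2, add_comm]

lemma integral_nrm_shrinkage_sub_sq (hp : p ≠ 0) (hS : ∀ i j, MemLp (fun ω => S ω i j) 2 P)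
    (hES : ∀ i j, ∫ ω, S ω i j ∂P = Sig i j) (ρ1 ρ2 : ℝ) :
    ∫ ω, nrm (ρ1 • (1 : Matrix (Fin p) (Fin p) ℝ) + ρ2 • S ω - Sig) ^ 2 ∂P =
      shrinkageRisk (muS Sig) (alpha2 Sig) (∫ ω, nrm (S ω - Sig) ^ 2 ∂P) ρ1 ρ2 := by
  have hsplit : ∀ ω, ρ1 • (1 : Matrix (Fin p) (Fin p) ℝ) + ρ2 • S ω - Sig =
      ρ2 • (S ω - Sig) + ((ρ1 + (ρ2 - 1) * muS Sig) • 1 + (ρ2 - 1) • (Sig - muS Sig • 1)) :=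
    fun ω => by module
  simp only [hsplit, integral_nrm_smul_sub_add_sq hS hES,
    nrm_smul_one_add_smul_sq hp (inp_sub_muS_smul_one hp Sig), shrinkageRisk, alpha2]
  ring

end UnbiasedEstimator

section SampleCovariance

variable {p n : ℕ}

lemma sampleCov_apply (hn : n ≠ 0) (X : Matrix (Fin p) (Fin n) ℝ) (i j : Fin p) :
    sampleCov X i j =
      ((n : ℝ) - 1)⁻¹ * (∑ k, X i k * X j k - (n : ℝ)⁻¹ * ((∑ k, X i k) * ∑ k, X j k)) := by
  simp only [sampleCov, ctr, Matrix.smul_apply, Matrix.mul_apply, Matrix.transpose_apply,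
    Matrix.of_apply, smul_eq_mul, sub_mul, mul_sub, Finset.sum_sub_distrib, ← Finset.sum_mul,
    ← Finset.mul_sum, Finset.sum_const, Finset.card_univ, Fintype.card_fin, nsmul_eq_mul]
  field_simp
  ring

instance : ENNReal.HolderTriple 4 4 2 where
  inv_add_inv_eq_inv := by
    rw [← two_mul, show (4 : ENNReal) = 2 * 2 by norm_num, ENNReal.mul_inv (by simp) (by simp),
      ← mul_assoc, ENNReal.mul_inv_cancel (by simp) (by simp), one_mul]

variable {P : Measure Ω} {X : Ω → Matrix (Fin p) (Fin n) ℝ} {Sig : Matrix (Fin p) (Fin p) ℝ}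

lemma memLp_sampleCov_apply (hn : n ≠ 0) (hX : ∀ i k, MemLp (fun ω => X ω i k) 4 P)
    (i j : Fin p) : MemLp (fun ω => sampleCov (X ω) i j) 2 P := by
  simp only [sampleCov_apply hn]
  have hsum : ∀ i, MemLp (fun ω => ∑ k, X ω i k) 4 P :=
    fun i => memLp_finsetSum _ fun k _ => hX i k
  exact ((memLp_finsetSum _ fun k _ => (hX j k).mul' (hX i k)).sub
    (((hsum j).mul' (hsum i)).const_mul _)).const_mul _

lemma integral_mul_eq_ite (hX : ∀ i k, AEStronglyMeasurable (fun ω => X ω i k) P)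
    (hmean : ∀ i k, ∫ ω, X ω i k ∂P = 0) (hcov : ∀ i j k, ∫ ω, X ω i k * X ω j k ∂P = Sig i j)
    (hindep : iIndepFun (fun k ω i => X ω i k) P) (i j : Fin p) (k l : Fin n) :
    ∫ ω, X ω i k * X ω j l ∂P = if k = l then Sig i j else 0 := by
  split_ifs with hkl
  · rw [← hkl, hcov]
  · have hind : IndepFun (fun ω => X ω i k) (fun ω => X ω j l) P :=
      (hindep.indepFun hkl).comp (measurable_pi_apply i) (measurable_pi_apply j)
    rw [hind.integral_fun_mul_eq_mul_integral (hX i k) (hX j l), hmean, zero_mul]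

lemma integral_sampleCov_apply [IsProbabilityMeasure P] (hn : 2 ≤ n)
    (hX : ∀ i k, MemLp (fun ω => X ω i k) 2 P)
    (hmean : ∀ i k, ∫ ω, X ω i k ∂P = 0) (hcov : ∀ i j k, ∫ ω, X ω i k * X ω j k ∂P = Sig i j)
    (hindep : iIndepFun (fun k ω i => X ω i k) P) (i j : Fin p) :
    ∫ ω, sampleCov (X ω) i j ∂P = Sig i j := by
  have hmul : ∀ i j k l, Integrable (fun ω => X ω i k * X ω j l) P :=
    fun i j k l => (hX i k).integrable_mul (hX j l)
  simp only [sampleCov_apply (by omega : n ≠ 0), Finset.sum_mul_sum]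
  rw [integral_const_mul, integral_sub (integrable_finsetSum _ fun k _ => hmul i j k k)
      ((integrable_finsetSum _ fun k _ =>
        integrable_finsetSum _ fun l _ => hmul i j k l).const_mul _),
    integral_const_mul, integral_finsetSum _ fun k _ => hmul i j k k,
    integral_finsetSum _ fun k _ => integrable_finsetSum _ fun l _ => hmul i j k l]
  simp only [integral_finsetSum _ fun l _ => hmul i j _ l,
    integral_mul_eq_ite (fun i k => (hX i k).aestronglyMeasurable) hmean hcov hindep,
    Finset.sum_ite_eq, Finset.mem_univ, if_true, Finset.sum_const, Finset.card_univ,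
    Fintype.card_fin, nsmul_eq_mul]
  have hn1 : (n : ℝ) - 1 ≠ 0 := by
    have : (2 : ℝ) ≤ n := by exact_mod_cast hn
    linarith
  field_simp

end SampleCovariance

theorem stmt_0_general
    {Ω : Type*} [MeasurableSpace Ω] (P : Measure Ω) [IsProbabilityMeasure P]
    (n pn : ℕ) (hn : 2 ≤ n) (hpn : 1 ≤ pn)
    (X : Ω → Matrix (Fin pn) (Fin n) ℝ)
    (Sig : Matrix (Fin pn) (Fin pn) ℝ)
    (hL8 : ∀ (i : Fin pn) (k : Fin n), MemLp (fun ω => X ω i k) 8 P)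
    (hmean : ∀ (i : Fin pn) (k : Fin n), ∫ ω, X ω i k ∂P = 0)
    (hcov : ∀ (i j : Fin pn) (k : Fin n), ∫ ω, X ω i k * X ω j k ∂P = Sig i j)
    (hindep : iIndepFun
      (fun (k : Fin n) (ω : Ω) (i : Fin pn) => X ω i k) P)
    (hδ : 0 < delta2 P X Sig) :
    (∫ ω, nrm (SigmaStar P X Sig ω - Sig) ^ 2 ∂P
        = alpha2 Sig * beta2 P X Sig / delta2 P X Sig) ∧
    (∀ ρ1 ρ2 : ℝ,
      alpha2 Sig * beta2 P X Sig / delta2 P X Sig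
        ≤ ∫ ω, nrm (ρ1 • (1 : Matrix (Fin pn) (Fin pn) ℝ)
            + ρ2 • sampleCov (X ω) - Sig) ^ 2 ∂P) ∧
    (∀ ρ1 ρ2 : ℝ,
      (∫ ω, nrm (ρ1 • (1 : Matrix (Fin pn) (Fin pn) ℝ)
          + ρ2 • sampleCov (X ω) - Sig) ^ 2 ∂P
        = alpha2 Sig * beta2 P X Sig / delta2 P X Sig) →
      ρ1 = beta2 P X Sig / delta2 P X Sig * muS Sig ∧
        ρ2 = alpha2 Sig / delta2 P X Sig) := by
  have hX : ∀ (q : ENNReal), q ≤ 8 → ∀ i k, MemLp (fun ω => X ω i k) q P :=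
    fun q hq i k => (hL8 i k).mono_exponent hq
  have hS : ∀ i j, MemLp (fun ω => sampleCov (X ω) i j) 2 P :=
    memLp_sampleCov_apply (by omega) (hX 4 (by norm_num))
  have hES : ∀ i j, ∫ ω, sampleCov (X ω) i j ∂P = Sig i j :=
    integral_sampleCov_apply hn (hX 2 (by norm_num)) hmean hcov hindep
  have hrisk : ∀ ρ1 ρ2 : ℝ, ∫ ω, nrm (ρ1 • (1 : Matrix (Fin pn) (Fin pn) ℝ)
      + ρ2 • sampleCov (X ω) - Sig) ^ 2 ∂P =
        shrinkageRisk (muS Sig) (alpha2 Sig) (beta2 P X Sig) ρ1 ρ2 :=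
    integral_nrm_shrinkage_sub_sq (by omega) hS hES
  have hdelta : delta2 P X Sig = alpha2 Sig + beta2 P X Sig :=
    integral_nrm_sub_muS_sq hS hES
  have hSigmaStar : ∀ ω, SigmaStar P X Sig ω = (beta2 P X Sig / delta2 P X Sig * muS Sig) •
      (1 : Matrix (Fin pn) (Fin pn) ℝ) + (alpha2 Sig / delta2 P X Sig) • sampleCov (X ω) :=
    fun ω => by rw [SigmaStar, smul_smul]
  simp only [hSigmaStar, hrisk]
  rw [hdelta] at hδ ⊢
  exact ⟨shrinkageRisk_oracle hδ.ne', le_shrinkageRisk hδ,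
    fun _ _ => eq_oracle_of_shrinkageRisk_eq hδ⟩

theorem stmt_0
    {Ω : Type*} [MeasurableSpace Ω] (P : Measure Ω) [IsProbabilityMeasure P]
    (n pn : ℕ) (hn : 2 ≤ n) (hpn : 1 ≤ pn)
    (X : Ω → Matrix (Fin pn) (Fin n) ℝ)
    (Sig : Matrix (Fin pn) (Fin pn) ℝ)
    (hmeas : Measurable X)
    (hL8 : ∀ (i : Fin pn) (k : Fin n), MemLp (fun ω => X ω i k) 8 P)
    (hmean : ∀ (i : Fin pn) (k : Fin n), ∫ ω, X ω i k ∂P = 0)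
    (hcov : ∀ (i j : Fin pn) (k : Fin n), ∫ ω, X ω i k * X ω j k ∂P = Sig i j)
    (hindep : iIndepFun
      (fun (k : Fin n) (ω : Ω) (i : Fin pn) => X ω i k) P)
    (hident : ∀ k k' : Fin n,
      IdentDistrib (fun ω (i : Fin pn) => X ω i k)
        (fun ω (i : Fin pn) => X ω i k') P P)
    (hδ : 0 < delta2 P X Sig) :
    (∫ ω, nrm (SigmaStar P X Sig ω - Sig) ^ 2 ∂P
        = alpha2 Sig * beta2 P X Sig / delta2 P X Sig) ∧
    (∀ ρ1 ρ2 : ℝ,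
      alpha2 Sig * beta2 P X Sig / delta2 P X Sig
        ≤ ∫ ω, nrm (ρ1 • (1 : Matrix (Fin pn) (Fin pn) ℝ)
            + ρ2 • sampleCov (X ω) - Sig) ^ 2 ∂P) ∧
    (∀ ρ1 ρ2 : ℝ,
      (∫ ω, nrm (ρ1 • (1 : Matrix (Fin pn) (Fin pn) ℝ)
          + ρ2 • sampleCov (X ω) - Sig) ^ 2 ∂P
        = alpha2 Sig * beta2 P X Sig / delta2 P X Sig) →
      ρ1 = beta2 P X Sig / delta2 P X Sig * muS Sig ∧
        ρ2 = alpha2 Sig / delta2 P X Sig) :=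
  stmt_0_general P n pn hn hpn X Sig hL8 hmean hcov hindep hδ

end LW
end
end

section
/- Under Assumptions 1 and 2, the quantities μ_n, α_n², β_n², and δ_n² remain bounded as n → ∞; that is, there exists a constant C (depending only on K₁ and K₂) such that μ_n ≤ C, α_n² ≤ C, β_n² ≤ C, and δ_n² ≤ C for all n. -/
open MeasureTheory ProbabilityTheory Matrix Filter
open scoped Topology

noncomputable section

namespace LW

variable {Ω : Type*} [MeasurableSpace Ω]

section Helpers

open scoped ENNReal

variable {Ω' : Type*} [MeasurableSpace Ω']

lemma e84 : (1 : ℝ≥0∞)/4 = 1/8 + 1/8 := by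
  rw [ENNReal.div_add_div_same,
    ENNReal.div_eq_div_iff (by norm_num) (by norm_num) (by norm_num) (by norm_num)]
  norm_num

lemma e42 : (1 : ℝ≥0∞)/2 = 1/4 + 1/4 := by
  rw [ENNReal.div_add_div_same,
    ENNReal.div_eq_div_iff (by norm_num) (by norm_num) (by norm_num) (by norm_num)]
  norm_num

lemma e21 : (1 : ℝ≥0∞)/1 = 1/2 + 1/2 := by
  rw [ENNReal.div_add_div_same,
    ENNReal.div_eq_div_iff (by norm_num) (by norm_num) (by norm_num) (by norm_num)]
  norm_num

lemma memLp_mul {P : Measure Ω'} {f g : Ω' → ℝ} {a b c : ℝ≥0∞} (hf : MeasureTheory.MemLp f a P)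
    (hg : MeasureTheory.MemLp g b P) (h : 1/c = 1/a + 1/b) :
    MeasureTheory.MemLp (fun ω => f ω * g ω) c P := by
  haveI : ENNReal.HolderTriple a b c := ⟨by rw [← one_div, ← one_div, ← one_div, h]⟩
  have := hg.smul hf (𝕜 := ℝ) (r := c)
  exact this

/-- product of two L² functions is integrable -/
lemma integrable_mul_L2 {P : Measure Ω'} {f g : Ω' → ℝ} (hf : MeasureTheory.MemLp f 2 P)
    (hg : MeasureTheory.MemLp g 2 P) : MeasureTheory.Integrable (fun ω => f ω * g ω) P :=
  MeasureTheory.memLp_one_iff_integrable.mp (memLp_mul hf hg (by simpa using e21))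

/-- `(∫ f)² ≤ ∫ f²` on a probability space. -/
lemma sq_int_le (P : Measure Ω') [MeasureTheory.IsProbabilityMeasure P] {f : Ω' → ℝ}
    (hf : MeasureTheory.MemLp f 2 P) : (∫ ω, f ω ∂P)^2 ≤ ∫ ω, (f ω)^2 ∂P := by
  have h2 : MeasureTheory.Integrable (fun ω => (f ω)^2) P := by
    simpa [sq] using integrable_mul_L2 hf hf
  have h1 : MeasureTheory.Integrable f P :=
    MeasureTheory.memLp_one_iff_integrable.mp (hf.mono_exponent (by norm_num))
  set m := ∫ ω, f ω ∂P with hm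
  have h0 : 0 ≤ ∫ ω, (f ω - m)^2 ∂P := MeasureTheory.integral_nonneg (fun ω => sq_nonneg _)
  have hexp : ∫ ω, (f ω - m)^2 ∂P = (∫ ω, (f ω)^2 ∂P) - m^2 := by
    have : (fun ω => (f ω - m)^2) = fun ω => (f ω)^2 - (2*m) * f ω + m^2 := by
      funext ω; ring
    have hsub : MeasureTheory.Integrable (fun ω => (f ω)^2 - (2*m) * f ω) P :=
      h2.sub (h1.const_mul _)
    rw [this, MeasureTheory.integral_add hsub (MeasureTheory.integrable_const _),
      MeasureTheory.integral_sub h2 (h1.const_mul _), MeasureTheory.integral_const_mul]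
    simp only [MeasureTheory.integral_const, MeasureTheory.measure_univ, ENNReal.toReal_one, probReal_univ,
      smul_eq_mul, one_mul, ← hm]
    ring
  linarith [h0, hexp.symm.le]

lemma sum_sqrt_le {ι : Type*} (s : Finset ι) (f : ι → ℝ) (h : ∀ i ∈ s, 0 ≤ f i) :
    ∑ i ∈ s, Real.sqrt (f i) ≤ Real.sqrt (s.card * ∑ i ∈ s, f i) := by
  have h1 : (∑ i ∈ s, Real.sqrt (f i))^2 ≤ s.card * ∑ i ∈ s, (Real.sqrt (f i))^2 :=
    sq_sum_le_card_mul_sum_sq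
  have h2 : ∀ i ∈ s, (Real.sqrt (f i))^2 = f i := fun i hi => Real.sq_sqrt (h i hi)
  rw [Finset.sum_congr rfl h2] at h1
  have h3 : 0 ≤ ∑ i ∈ s, Real.sqrt (f i) :=
    Finset.sum_nonneg fun i _ => Real.sqrt_nonneg _
  calc ∑ i ∈ s, Real.sqrt (f i) = Real.sqrt ((∑ i ∈ s, Real.sqrt (f i))^2) := by
        rw [Real.sqrt_sq h3]
    _ ≤ Real.sqrt (s.card * ∑ i ∈ s, f i) := Real.sqrt_le_sqrt h1

lemma orth_sum_sq {q : ℕ} (Γ : Matrix (Fin q) (Fin q) ℝ) (h : Γ * Γᵀ = 1)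
    (v : Fin q → ℝ) : ∑ i, (∑ a, Γ a i * v a)^2 = ∑ a, (v a)^2 := by
  have key : ∀ a b, ∑ i, Γ a i * Γ b i = (1 : Matrix (Fin q) (Fin q) ℝ) a b := by
    intro a b; rw [← h]; simp [Matrix.mul_apply, Matrix.transpose_apply]
  calc ∑ i, (∑ a, Γ a i * v a)^2
      = ∑ i, ∑ a, ∑ b, (v a * v b) * (Γ a i * Γ b i) := by
        refine Finset.sum_congr rfl fun i _ => ?_
        rw [sq, Finset.sum_mul_sum]
        exact Finset.sum_congr rfl fun a _ => Finset.sum_congr rfl fun b _ => by ring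
    _ = ∑ a, ∑ b, (v a * v b) * ∑ i, Γ a i * Γ b i := by
        rw [Finset.sum_comm]
        refine Finset.sum_congr rfl fun a _ => ?_
        rw [Finset.sum_comm]
        refine Finset.sum_congr rfl fun b _ => ?_
        rw [Finset.mul_sum]
    _ = ∑ a, (v a)^2 := by
        simp only [key]
        refine Finset.sum_congr rfl fun a _ => ?_
        rw [Finset.sum_eq_single a (fun b _ hb => by
          simp [Matrix.one_apply, Ne.symm hb]) (by simp)]
        simp [Matrix.one_apply, sq]

/-- `nrm` squared is the (normalized) sum of squares of entries. -/
lemma nrm_sq {q : ℕ} (M : Matrix (Fin q) (Fin q) ℝ) :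
    nrm M ^ 2 = (∑ i, ∑ j, (M i j)^2) / q := by
  have htr : (M * Mᵀ).trace = ∑ i, ∑ j, (M i j)^2 := by
    simp [Matrix.trace, Matrix.diag, Matrix.mul_apply, sq]
  rw [nrm, htr, Real.sq_sqrt (by positivity)]

end Helpers

open scoped ENNReal in
set_option maxHeartbeats 3200000 in
lemma main_bounds {Ω : Type*} [MeasurableSpace Ω] (P : Measure Ω) [IsProbabilityMeasure P]
    {q n : ℕ} (hq : 1 ≤ q) (hn : 2 ≤ n)
    (X : Ω → Matrix (Fin q) (Fin n) ℝ)
    (Sig Γ Λ : Matrix (Fin q) (Fin q) ℝ)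
    (hΓ1 : Γ * Γᵀ = 1) (hΓ2 : Γᵀ * Γ = 1)
    (hΛ : Λ.IsDiag)
    (hdecomp : Sig = Γ * Λ * Γᵀ)
    (hmeas : Measurable X)
    (hL8 : ∀ i k, MemLp (fun ω => X ω i k) 8 P)
    (hmean : ∀ i k, ∫ ω, X ω i k ∂P = 0)
    (hcov : ∀ i j k, ∫ ω, X ω i k * X ω j k ∂P = Sig i j)
    (hindep : iIndepFun
      (fun (k : Fin n) (ω : Ω) (i : Fin q) => X ω i k) P)
    (K1 K2 : ℝ) (hK1 : (q:ℝ)/n ≤ K1)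
    (hK2 : ∀ k : Fin n, (∑ i, ∫ ω, ((Γᵀ * X ω) i k)^8 ∂P)/q ≤ K2) :
    muS Sig ≤ Real.sqrt (Real.sqrt K2) ∧ alpha2 Sig ≤ Real.sqrt K2 ∧
    beta2 P X Sig ≤ 160*K1*Real.sqrt K2 ∧
    delta2 P X Sig ≤ 2*Real.sqrt K2 + 320*K1*Real.sqrt K2 := by
  classical
  have hq0 : (0:ℝ) < q := by exact_mod_cast hq
  have hn2 : (2:ℝ) ≤ n := by exact_mod_cast hn
  have hn0 : (0:ℝ) < n := by linarith
  have hn1 : (1:ℝ) ≤ (n:ℝ) - 1 := by linarith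
  have hsK2 : 0 ≤ Real.sqrt K2 := Real.sqrt_nonneg _
  have hssK2 : 0 ≤ Real.sqrt (Real.sqrt K2) := Real.sqrt_nonneg _
  set k0 : Fin n := ⟨0, by omega⟩ with hk0
  -- pointwise formula for the rotated entries
  have hyp : ∀ (i : Fin q) (k : Fin n) (ω : Ω), (Γᵀ * X ω) i k = ∑ a, Γ a i * X ω a k := by
    intro i k ω
    simp [Matrix.mul_apply, Matrix.transpose_apply]
  have hy8 : ∀ i k, MemLp (fun ω => (Γᵀ * X ω) i k) 8 P := by
    intro i k
    have heq : (fun ω => (Γᵀ * X ω) i k) = fun ω => ∑ a, Γ a i * X ω a k :=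
      funext fun ω => hyp i k ω
    rw [heq]
    have h := memLp_finsetSum' (μ := P) Finset.univ
      (f := fun (a : Fin q) => fun ω => Γ a i * X ω a k)
      (fun a _ => (hL8 a k).const_mul _)
    have heq2 : (∑ a : Fin q, fun ω => Γ a i * X ω a k)
        = fun ω => ∑ a : Fin q, Γ a i * X ω a k := by
      funext ω; simp
    rwa [heq2] at h
  -- power facts for L⁸ functions
  have powfacts : ∀ f : Ω → ℝ, MemLp f 8 P →
      MemLp (fun ω => (f ω)^2) 4 P ∧ MemLp (fun ω => (f ω)^4) 2 P ∧
      Integrable (fun ω => (f ω)^8) P ∧ Integrable (fun ω => (f ω)^4) P ∧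
      Integrable (fun ω => (f ω)^2) P := by
    intro f hf
    have h2 : MemLp (fun ω => (f ω)^2) 4 P := by
      have := memLp_mul hf hf e84
      have heq : (fun ω => (f ω)^2) = fun ω => f ω * f ω := by funext ω; ring
      rw [heq]; exact this
    have h4 : MemLp (fun ω => (f ω)^4) 2 P := by
      have := memLp_mul h2 h2 e42
      have heq : (fun ω => (f ω)^4) = fun ω => (f ω)^2 * (f ω)^2 := by funext ω; ring
      rw [heq]; exact this
    have i8 : Integrable (fun ω => (f ω)^8) P := by
      have := integrable_mul_L2 h4 h4
      have heq : (fun ω => (f ω)^8) = fun ω => (f ω)^4 * (f ω)^4 := by funext ω; ring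
      rw [heq]; exact this
    have i4 : Integrable (fun ω => (f ω)^4) P := by
      have := integrable_mul_L2 (h2.mono_exponent (by norm_num))
        (h2.mono_exponent (by norm_num))
      have heq : (fun ω => (f ω)^4) = fun ω => (f ω)^2 * (f ω)^2 := by funext ω; ring
      rw [heq]; exact this
    have i2 : Integrable (fun ω => (f ω)^2) P := by
      have := integrable_mul_L2 (hf.mono_exponent (by norm_num))
        (hf.mono_exponent (by norm_num))
      have heq : (fun ω => (f ω)^2) = fun ω => f ω * f ω := by funext ω; ring
      rw [heq]; exact this
    exact ⟨h2, h4, i8, i4, i2⟩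
  have hEy8nn : ∀ i k, 0 ≤ ∫ ω, ((Γᵀ * X ω) i k)^8 ∂P :=
    fun i k => integral_nonneg fun ω => by positivity
  have hEy4nn : ∀ i k, 0 ≤ ∫ ω, ((Γᵀ * X ω) i k)^4 ∂P :=
    fun i k => integral_nonneg fun ω => by positivity
  have hK2' : ∀ k, ∑ i, ∫ ω, ((Γᵀ * X ω) i k)^8 ∂P ≤ q * K2 := by
    intro k
    have h := hK2 k
    rw [div_le_iff₀ hq0] at h
    linarith
  have hK2nn : 0 ≤ K2 := by
    have h := hK2 k0
    have h0 : 0 ≤ (∑ i, ∫ ω, ((Γᵀ * X ω) i k0)^8 ∂P)/q :=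
      div_nonneg (Finset.sum_nonneg fun i _ => hEy8nn i k0) hq0.le
    linarith
  -- fourth moments
  have hEy4le : ∀ i k, ∫ ω, ((Γᵀ * X ω) i k)^4 ∂P
      ≤ Real.sqrt (∫ ω, ((Γᵀ * X ω) i k)^8 ∂P) := by
    intro i k
    have hs := sq_int_le P (powfacts _ (hy8 i k)).2.1
    have heq : (fun ω => (((Γᵀ * X ω) i k)^4)^2) = fun ω => ((Γᵀ * X ω) i k)^8 := by
      funext ω; ring
    rw [heq] at hs
    exact (Real.le_sqrt (hEy4nn i k) (hEy8nn i k)).mpr hs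
  have hS4 : ∀ k, ∑ i, ∫ ω, ((Γᵀ * X ω) i k)^4 ∂P ≤ q * Real.sqrt K2 := by
    intro k
    calc ∑ i, ∫ ω, ((Γᵀ * X ω) i k)^4 ∂P
        ≤ ∑ i, Real.sqrt (∫ ω, ((Γᵀ * X ω) i k)^8 ∂P) :=
          Finset.sum_le_sum fun i _ => hEy4le i k
      _ ≤ Real.sqrt ((Finset.univ : Finset (Fin q)).card * ∑ i, ∫ ω, ((Γᵀ * X ω) i k)^8 ∂P) :=
          sum_sqrt_le _ _ (fun i _ => hEy8nn i k)
      _ ≤ Real.sqrt ((q:ℝ)^2 * K2) := by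
          apply Real.sqrt_le_sqrt
          have hc : ((Finset.univ : Finset (Fin q)).card : ℝ) = q := by simp
          rw [hc]
          calc (q:ℝ) * ∑ i, ∫ ω, ((Γᵀ * X ω) i k)^8 ∂P ≤ (q:ℝ) * ((q:ℝ)*K2) :=
                mul_le_mul_of_nonneg_left (hK2' k) hq0.le
            _ = (q:ℝ)^2 * K2 := by ring
      _ = q * Real.sqrt K2 := by
          rw [Real.sqrt_mul (by positivity), Real.sqrt_sq hq0.le]
  -- second moments
  have hEy2nn : ∀ i k, 0 ≤ ∫ ω, ((Γᵀ * X ω) i k)^2 ∂P :=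
    fun i k => integral_nonneg fun ω => by positivity
  have hEy2le : ∀ i k, (∫ ω, ((Γᵀ * X ω) i k)^2 ∂P)^2 ≤ ∫ ω, ((Γᵀ * X ω) i k)^4 ∂P := by
    intro i k
    have hs := sq_int_le P ((powfacts _ (hy8 i k)).1.mono_exponent (by norm_num))
    have heq : (fun ω => (((Γᵀ * X ω) i k)^2)^2) = fun ω => ((Γᵀ * X ω) i k)^4 := by
      funext ω; ring
    rw [heq] at hs
    exact hs
  have hS2 : ∀ k, ∑ i, ∫ ω, ((Γᵀ * X ω) i k)^2 ∂P ≤ q * Real.sqrt (Real.sqrt K2) := by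
    intro k
    calc ∑ i, ∫ ω, ((Γᵀ * X ω) i k)^2 ∂P
        ≤ ∑ i, Real.sqrt (∫ ω, ((Γᵀ * X ω) i k)^4 ∂P) :=
          Finset.sum_le_sum fun i _ => (Real.le_sqrt (hEy2nn i k) (hEy4nn i k)).mpr (hEy2le i k)
      _ ≤ Real.sqrt ((Finset.univ : Finset (Fin q)).card * ∑ i, ∫ ω, ((Γᵀ * X ω) i k)^4 ∂P) :=
          sum_sqrt_le _ _ (fun i _ => hEy4nn i k)
      _ ≤ Real.sqrt ((q:ℝ)^2 * Real.sqrt K2) := by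
          apply Real.sqrt_le_sqrt
          have hc : ((Finset.univ : Finset (Fin q)).card : ℝ) = q := by simp
          rw [hc]
          calc (q:ℝ) * ∑ i, ∫ ω, ((Γᵀ * X ω) i k)^4 ∂P ≤ (q:ℝ) * ((q:ℝ)*Real.sqrt K2) :=
                mul_le_mul_of_nonneg_left (hS4 k) hq0.le
            _ = (q:ℝ)^2 * Real.sqrt K2 := by ring
      _ = q * Real.sqrt (Real.sqrt K2) := by
          rw [Real.sqrt_mul (by positivity), Real.sqrt_sq hq0.le]
  -- basic integrability of entry products
  have hI2 : ∀ (i j : Fin q) (k l : Fin n), Integrable (fun ω => X ω i k * X ω j l) P :=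
    fun i j k l => integrable_mul_L2 ((hL8 i k).mono_exponent (by norm_num))
      ((hL8 j l).mono_exponent (by norm_num))
  -- Λ facts
  have hLam : Λ = Γᵀ * Sig * Γ := by
    rw [hdecomp]
    simp only [← Matrix.mul_assoc]
    rw [hΓ2, Matrix.one_mul, Matrix.mul_assoc, hΓ2, Matrix.mul_one]
  have hLamEy : ∀ (i : Fin q) (k : Fin n), Λ i i = ∫ ω, ((Γᵀ * X ω) i k)^2 ∂P := by
    intro i k
    have heq : (fun ω => ((Γᵀ * X ω) i k)^2)
        = fun ω => ∑ a, ∑ b, (Γ a i * Γ b i) * (X ω a k * X ω b k) := by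
      funext ω
      rw [hyp i k ω, sq, Finset.sum_mul_sum]
      exact Finset.sum_congr rfl fun a _ => Finset.sum_congr rfl fun b _ => by ring
    rw [heq, integral_finset_sum _ (fun a _ =>
      integrable_finset_sum _ (fun b _ => (hI2 a b k k).const_mul _))]
    have hval : ∀ a : Fin q, ∫ ω, ∑ b, (Γ a i * Γ b i) * (X ω a k * X ω b k) ∂P
        = ∑ b, (Γ a i * Γ b i) * Sig a b := by
      intro a
      rw [integral_finset_sum _ (fun b _ => (hI2 a b k k).const_mul _)]
      exact Finset.sum_congr rfl fun b _ => by rw [integral_const_mul, hcov]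
    rw [Finset.sum_congr rfl (fun a _ => hval a), hLam]
    simp only [Matrix.mul_apply, Matrix.transpose_apply, Finset.sum_mul]
    rw [Finset.sum_comm]
    exact Finset.sum_congr rfl fun a _ => Finset.sum_congr rfl fun b _ => by ring
  have htrace : Sig.trace = ∑ i, Λ i i := by
    rw [hdecomp, Matrix.trace_mul_cycle, hΓ2, Matrix.one_mul]
    simp [Matrix.trace, Matrix.diag]
  have hmuval : muS Sig = (∑ i, Λ i i)/q := by
    simp only [muS, inp]
    rw [Matrix.transpose_one, Matrix.mul_one, htrace]
  have hmu : muS Sig ≤ Real.sqrt (Real.sqrt K2) := by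
    rw [hmuval, div_le_iff₀ hq0]
    calc ∑ i, Λ i i = ∑ i, ∫ ω, ((Γᵀ * X ω) i k0)^2 ∂P :=
          Finset.sum_congr rfl fun i _ => hLamEy i k0
      _ ≤ q * Real.sqrt (Real.sqrt K2) := hS2 k0
      _ = Real.sqrt (Real.sqrt K2) * q := mul_comm _ _
  have hLsq : ∑ i, (Λ i i)^2 ≤ q * Real.sqrt K2 := by
    calc ∑ i, (Λ i i)^2 = ∑ i, (∫ ω, ((Γᵀ * X ω) i k0)^2 ∂P)^2 :=
          Finset.sum_congr rfl fun i _ => by rw [hLamEy i k0]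
      _ ≤ ∑ i, ∫ ω, ((Γᵀ * X ω) i k0)^4 ∂P := Finset.sum_le_sum fun i _ => hEy2le i k0
      _ ≤ q * Real.sqrt K2 := hS4 k0
  have hΛsymm : Λᵀ = Λ := by
    ext i j
    rcases eq_or_ne i j with rfl | h
    · rfl
    · rw [Matrix.transpose_apply, hΛ (Ne.symm h), hΛ h]
  have hSigsymm : Sigᵀ = Sig := by
    rw [hdecomp]
    simp [Matrix.transpose_mul, Matrix.transpose_transpose, hΛsymm, Matrix.mul_assoc]
  have hcancel : ∀ M : Matrix (Fin q) (Fin q) ℝ, Γᵀ * (Γ * M) = M := by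
    intro M; rw [← Matrix.mul_assoc, hΓ2, Matrix.one_mul]
  have hSig2 : ∑ i, ∑ j, (Sig i j)^2 = ∑ i, (Λ i i)^2 := by
    have h1 : ∑ i, ∑ j, (Sig i j)^2 = (Sig * Sigᵀ).trace := by
      simp [Matrix.trace, Matrix.diag, Matrix.mul_apply, Matrix.transpose_apply, sq]
    have h2 : Sig * Sigᵀ = Γ * (Λ * (Λ * Γᵀ)) := by
      rw [hSigsymm, hdecomp]
      simp only [Matrix.mul_assoc]
      rw [hcancel]
    have h3 : (Γ * (Λ * (Λ * Γᵀ))).trace = (Λ * Λ).trace := by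
      rw [Matrix.trace_mul_comm]
      simp only [Matrix.mul_assoc]
      rw [hΓ2, Matrix.mul_one]
    have h4 : (Λ * Λ).trace = ∑ i, (Λ i i)^2 := by
      simp only [Matrix.trace, Matrix.diag, Matrix.mul_apply]
      refine Finset.sum_congr rfl fun i _ => ?_
      rw [Finset.sum_eq_single i (fun j _ hj => by rw [hΛ (Ne.symm hj), zero_mul])
        (fun h => absurd (Finset.mem_univ i) h)]
      · rw [sq]
    rw [h1, h2, h3, h4]
  -- α² bound
  have hqmu : ∑ i, Sig i i = q * muS Sig := by
    have h : ∑ i, Sig i i = Sig.trace := by simp [Matrix.trace, Matrix.diag]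
    rw [h, htrace, hmuval]
    field_simp
  have halpha : alpha2 Sig ≤ Real.sqrt K2 := by
    simp only [alpha2]
    rw [nrm_sq]
    have hexp : ∑ i, ∑ j, ((Sig - muS Sig • 1) i j)^2
        = (∑ i, ∑ j, (Sig i j)^2) - 2*muS Sig*(∑ i, Sig i i) + (muS Sig)^2 * q := by
      have hterm : ∀ i, ∑ j, ((Sig - muS Sig • 1) i j)^2
          = (∑ j, (Sig i j)^2) - 2*muS Sig*Sig i i + (muS Sig)^2 := by
        intro i
        have e1 : ∑ j, (if i = j then (1:ℝ) else 0) * Sig i j = Sig i i := by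
          rw [Finset.sum_eq_single i (fun j _ hj => by rw [if_neg (Ne.symm hj), zero_mul])
            (fun h => absurd (Finset.mem_univ i) h), if_pos rfl, one_mul]
        have e2 : ∑ j, (if i = j then (1:ℝ) else 0) = 1 := by
          rw [Finset.sum_eq_single i (fun j _ hj => if_neg (Ne.symm hj))
            (fun h => absurd (Finset.mem_univ i) h), if_pos rfl]
        have h1 : ∀ j, ((Sig - muS Sig • 1) i j)^2
            = (Sig i j)^2 - 2*muS Sig*((if i = j then (1:ℝ) else 0) * Sig i j)
              + (muS Sig)^2 * (if i = j then (1:ℝ) else 0) := by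
          intro j
          have he : (Sig - muS Sig • 1) i j
              = Sig i j - muS Sig * (if i = j then (1:ℝ) else 0) := by
            simp [Matrix.sub_apply, Matrix.smul_apply, Matrix.one_apply]
          rw [he]
          by_cases h : i = j
          · simp only [if_pos h]; ring
          · simp only [if_neg h]; ring
        calc ∑ j, ((Sig - muS Sig • 1) i j)^2
            = ∑ j, ((Sig i j)^2 - 2*muS Sig*((if i = j then (1:ℝ) else 0) * Sig i j)
                + (muS Sig)^2 * (if i = j then (1:ℝ) else 0)) :=
              Finset.sum_congr rfl fun j _ => h1 j
          _ = (∑ j, (Sig i j)^2) - 2*muS Sig*Sig i i + (muS Sig)^2 := by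
              rw [Finset.sum_add_distrib, Finset.sum_sub_distrib, ← Finset.mul_sum,
                ← Finset.mul_sum, e1, e2, mul_one]
      rw [Finset.sum_congr rfl fun i _ => hterm i, Finset.sum_add_distrib,
        Finset.sum_sub_distrib, ← Finset.mul_sum, Finset.sum_const, Finset.card_univ,
        Fintype.card_fin, nsmul_eq_mul]
      ring
    rw [hexp, hqmu]
    rw [div_le_iff₀ hq0]
    have h := hLsq
    have h2 := hSig2
    nlinarith [sq_nonneg (muS Sig), hq0]
  ------------------------------------------------------------------
  -- β² bound
  ------------------------------------------------------------------
  set c : ℝ := (2*(n:ℝ)*((n:ℝ)-1))⁻¹ with hc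
  set Z : Fin n × Fin n → Fin q → Fin q → Ω → ℝ := fun a i j ω =>
    (X ω i a.1 - X ω i a.2) * (X ω j a.1 - X ω j a.2)
      - (if a.1 = a.2 then 0 else 2 * Sig i j) with hZdef
  have hZapp : ∀ a i j ω, Z a i j ω =
      (X ω i a.1 - X ω i a.2) * (X ω j a.1 - X ω j a.2)
        - (if a.1 = a.2 then 0 else 2 * Sig i j) := fun a i j ω => rfl
  have hns : ((n:ℝ)) ≠ 0 := ne_of_gt hn0
  have hn1s : ((n:ℝ)-1) ≠ 0 := by linarith
  -- key algebraic identity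
  have hTid : ∀ ω i j, sampleCov (X ω) i j - Sig i j = c * ∑ a : Fin n × Fin n, Z a i j ω := by
    intro ω i j
    have hsc : sampleCov (X ω) i j
        = ((n:ℝ)-1)⁻¹ * ∑ k, (X ω i k - (∑ k', X ω i k')/n) * (X ω j k - (∑ k', X ω j k')/n) := by
      simp [sampleCov, ctr, Matrix.mul_apply, Matrix.smul_apply, Matrix.transpose_apply,
        Matrix.of_apply, smul_eq_mul]
    have h1 : ∑ k, (X ω i k - (∑ k', X ω i k')/n) * (X ω j k - (∑ k', X ω j k')/n)
        = (∑ k, X ω i k * X ω j k) - (∑ k, X ω i k) * (∑ k, X ω j k) / n := by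
      have hexp : ∀ k, (X ω i k - (∑ k', X ω i k')/n) * (X ω j k - (∑ k', X ω j k')/n)
          = X ω i k * X ω j k - ((∑ k', X ω j k')/n) * X ω i k
            - ((∑ k', X ω i k')/n) * X ω j k
            + ((∑ k', X ω i k') * (∑ k', X ω j k'))/n^2 := by
        intro k; field_simp; ring
      rw [Finset.sum_congr rfl fun k _ => hexp k]
      simp only [Finset.sum_add_distrib, Finset.sum_sub_distrib, ← Finset.mul_sum,
        ← Finset.sum_mul, Finset.sum_const, Finset.card_univ, Fintype.card_fin,
        nsmul_eq_mul]
      field_simp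
      ring
    have h2 : ∑ a : Fin n × Fin n, Z a i j ω
        = 2*(n:ℝ)*(∑ k, X ω i k * X ω j k) - 2*(∑ k, X ω i k)*(∑ k, X ω j k)
          - ((n:ℝ)^2 - n) * (2 * Sig i j) := by
      rw [Fintype.sum_prod_type]
      have hinner : ∀ k, ∑ l, Z (k, l) i j ω
          = (n:ℝ)*(X ω i k * X ω j k) - X ω i k * (∑ l, X ω j l)
            - (∑ l, X ω i l) * X ω j k + (∑ l, X ω i l * X ω j l)
            - ((n:ℝ)-1) * (2*Sig i j) := by
        intro k
        have hterm : ∀ l, Z (k,l) i j ω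
            = (X ω i k * X ω j k - X ω i k * X ω j l - X ω i l * X ω j k + X ω i l * X ω j l)
              - (if k = l then 0 else 2 * Sig i j) := by
          intro l; rw [hZapp]; ring_nf
        rw [Finset.sum_congr rfl fun l _ => hterm l, Finset.sum_sub_distrib]
        congr 1
        · simp only [Finset.sum_add_distrib, Finset.sum_sub_distrib, ← Finset.mul_sum,
            ← Finset.sum_mul, Finset.sum_const, Finset.card_univ, Fintype.card_fin,
            nsmul_eq_mul]
          ring
        · have hsplit : ∀ l, (if k = l then (0:ℝ) else 2*Sig i j)
              = 2*Sig i j - (if k = l then 2*Sig i j else 0) := by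
            intro l; by_cases h : k = l <;> simp [h]
          rw [Finset.sum_congr rfl fun l _ => hsplit l, Finset.sum_sub_distrib,
            Finset.sum_const, Finset.card_univ, Fintype.card_fin, nsmul_eq_mul,
            Finset.sum_ite_eq]
          simp only [Finset.mem_univ, if_true]
          ring
      rw [Finset.sum_congr rfl fun k _ => hinner k]
      simp only [Finset.sum_sub_distrib, Finset.sum_add_distrib, ← Finset.mul_sum,
        ← Finset.sum_mul, Finset.sum_const, Finset.card_univ, Fintype.card_fin,
        nsmul_eq_mul]
      ring
    rw [hsc, h1, h2, hc]
    field_simp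
  -- integrability for the Z's
  have hdmem : ∀ (i : Fin q) (k l : Fin n), MemLp (fun ω => X ω i k - X ω i l) 8 P :=
    fun i k l => (hL8 i k).sub (hL8 i l)
  have hprodmem : ∀ (a : Fin n × Fin n) i j,
      MemLp (fun ω => (X ω i a.1 - X ω i a.2) * (X ω j a.1 - X ω j a.2)) 4 P :=
    fun a i j => memLp_mul (hdmem i a.1 a.2) (hdmem j a.1 a.2) e84
  have hZmem4 : ∀ a i j, MemLp (Z a i j) 4 P := by
    intro a i j
    have h := (hprodmem a i j).sub (memLp_const (μ := P) (if a.1 = a.2 then (0:ℝ) else 2*Sig i j))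
    exact h
  have hZmem2 : ∀ a i j, MemLp (Z a i j) 2 P :=
    fun a i j => (hZmem4 a i j).mono_exponent (by norm_num)
  have hZint : ∀ a i j, Integrable (Z a i j) P :=
    fun a i j => memLp_one_iff_integrable.mp
      ((hZmem4 a i j).mono_exponent (by norm_num))
  have hZZint : ∀ a b i j, Integrable (fun ω => Z a i j ω * Z b i j ω) P :=
    fun a b i j => integrable_mul_L2 (hZmem2 a i j) (hZmem2 b i j)
  have hZsqint : ∀ a i j, Integrable (fun ω => (Z a i j ω)^2) P := by
    intro a i j
    have heq : (fun ω => (Z a i j ω)^2) = fun ω => Z a i j ω * Z a i j ω := by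
      funext ω; ring
    rw [heq]; exact hZZint a a i j
  -- cross-column products integrate to zero
  have hcross0 : ∀ (i j : Fin q) (k l : Fin n), k ≠ l → ∫ ω, X ω i k * X ω j l ∂P = 0 := by
    intro i j k l hkl
    have hind : IndepFun (fun ω => X ω i k) (fun ω => X ω j l) P := by
      have h1 := hindep.indepFun hkl
      exact h1.comp (measurable_pi_apply i) (measurable_pi_apply j)
    have h : ∫ ω, X ω i k * X ω j l ∂P
        = (∫ ω, X ω i k ∂P) * ∫ ω, X ω j l ∂P :=
      hind.integral_fun_mul_eq_mul_integral
        (memLp_one_iff_integrable.mp ((hL8 i k).mono_exponent (by norm_num))).aestronglyMeasurable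
        (memLp_one_iff_integrable.mp ((hL8 j l).mono_exponent (by norm_num))).aestronglyMeasurable
    rw [h, hmean, zero_mul]
  -- Z has mean zero off the diagonal
  have hEZ0 : ∀ (a : Fin n × Fin n) i j, a.1 ≠ a.2 → ∫ ω, Z a i j ω ∂P = 0 := by
    intro a i j ha
    have hrep : (fun ω => Z a i j ω) = fun ω =>
        X ω i a.1 * X ω j a.1 - X ω i a.1 * X ω j a.2 - X ω i a.2 * X ω j a.1
          + X ω i a.2 * X ω j a.2 - 2 * Sig i j := by
      funext ω; rw [hZapp]; simp only [if_neg ha]; ring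
    have i1 : Integrable (fun ω => X ω i a.1 * X ω j a.1 - X ω i a.1 * X ω j a.2) P :=
      (hI2 i j a.1 a.1).sub (hI2 i j a.1 a.2)
    have i2 : Integrable (fun ω => (X ω i a.1 * X ω j a.1 - X ω i a.1 * X ω j a.2)
        - X ω i a.2 * X ω j a.1) P := i1.sub (hI2 i j a.2 a.1)
    have i3 : Integrable (fun ω => ((X ω i a.1 * X ω j a.1 - X ω i a.1 * X ω j a.2)
        - X ω i a.2 * X ω j a.1) + X ω i a.2 * X ω j a.2) P := i2.add (hI2 i j a.2 a.2)
    rw [hrep, integral_sub i3 (integrable_const _), integral_add i2 (hI2 i j a.2 a.2),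
      integral_sub i1 (hI2 i j a.2 a.1), integral_sub (hI2 i j a.1 a.1) (hI2 i j a.1 a.2),
      hcov, hcov, hcross0 i j a.1 a.2 ha, hcross0 i j a.2 a.1 (Ne.symm ha),
      integral_const]
    simp
    ring
  -- Z's over disjoint column pairs are independent, so products integrate to zero
  have hcol : ∀ k : Fin n, Measurable (fun ω (i : Fin q) => X ω i k) := by
    intro k
    exact measurable_pi_lambda _ fun i =>
      (measurable_pi_apply k).comp ((measurable_pi_apply i).comp hmeas)
  have hgoodint : ∀ (a b : Fin n × Fin n) i j, a.1 ≠ a.2 → b.1 ≠ b.2 →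
      a.1 ≠ b.1 → a.1 ≠ b.2 → a.2 ≠ b.1 → a.2 ≠ b.2 →
      ∫ ω, Z a i j ω * Z b i j ω ∂P = 0 := by
    intro a b i j ha hb h1 h2 h3 h4
    have hpair := hindep.indepFun_prodMk_prodMk hcol a.1 a.2 b.1 b.2 h1 h2 h3 h4
    have hφm : ∀ (C : ℝ), Measurable (fun v : (Fin q → ℝ) × (Fin q → ℝ) =>
        (v.1 i - v.2 i) * (v.1 j - v.2 j) - C) := by
      intro C
      apply Measurable.sub _ measurable_const
      exact (((measurable_pi_apply i).comp measurable_fst).sub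
        ((measurable_pi_apply i).comp measurable_snd)).mul
        (((measurable_pi_apply j).comp measurable_fst).sub
        ((measurable_pi_apply j).comp measurable_snd))
    have hind2 : IndepFun (Z a i j) (Z b i j) P :=
      hpair.comp (hφm (if a.1 = a.2 then 0 else 2*Sig i j))
        (hφm (if b.1 = b.2 then 0 else 2*Sig i j))
    have h : ∫ ω, Z a i j ω * Z b i j ω ∂P
        = (∫ ω, Z a i j ω ∂P) * ∫ ω, Z b i j ω ∂P :=
      hind2.integral_fun_mul_eq_mul_integral (hZint a i j).aestronglyMeasurable
        (hZint b i j).aestronglyMeasurable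
    rw [h, hEZ0 a i j ha, zero_mul]
  have hdeg : ∀ (a : Fin n × Fin n) i j, a.1 = a.2 → ∀ ω, Z a i j ω = 0 := by
    intro a i j ha ω
    rw [hZapp, if_pos ha, ha]
    ring
  ------------------------------------------------------------------
  -- uniform second-moment bound
  have hG : ∀ (a : Fin n × Fin n),
      ∑ i, ∑ j, ∫ ω, (Z a i j ω)^2 ∂P ≤ 40 * (q:ℝ)^2 * Real.sqrt K2 := by
    intro a
    have huu : ∀ i j, Integrable
        (fun ω => ((X ω i a.1 - X ω i a.2) * (X ω j a.1 - X ω j a.2))^2) P := by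
      intro i j
      have h := integrable_mul_L2 ((hprodmem a i j).mono_exponent (by norm_num))
        ((hprodmem a i j).mono_exponent (by norm_num))
      have heq : (fun ω => ((X ω i a.1 - X ω i a.2) * (X ω j a.1 - X ω j a.2))^2)
          = fun ω => ((X ω i a.1 - X ω i a.2) * (X ω j a.1 - X ω j a.2))
            * ((X ω i a.1 - X ω i a.2) * (X ω j a.1 - X ω j a.2)) := by
        funext ω; ring
      rw [heq]; exact h
    have hZsqle : ∀ i j, ∫ ω, (Z a i j ω)^2 ∂P
        ≤ 2*(∫ ω, ((X ω i a.1 - X ω i a.2) * (X ω j a.1 - X ω j a.2))^2 ∂P)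
          + 8*(Sig i j)^2 := by
      intro i j
      have hpt : ∀ ω, (Z a i j ω)^2
          ≤ 2*((X ω i a.1 - X ω i a.2) * (X ω j a.1 - X ω j a.2))^2 + 8*(Sig i j)^2 := by
        intro ω
        rw [hZapp]
        by_cases h : a.1 = a.2
        · rw [if_pos h]
          nlinarith [sq_nonneg ((X ω i a.1 - X ω i a.2) * (X ω j a.1 - X ω j a.2)),
            sq_nonneg (Sig i j)]
        · rw [if_neg h]
          nlinarith [sq_nonneg ((X ω i a.1 - X ω i a.2) * (X ω j a.1 - X ω j a.2)
            + 2*Sig i j), sq_nonneg (Sig i j)]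
      calc ∫ ω, (Z a i j ω)^2 ∂P
          ≤ ∫ ω, 2*((X ω i a.1 - X ω i a.2) * (X ω j a.1 - X ω j a.2))^2
              + 8*(Sig i j)^2 ∂P :=
            integral_mono (hZsqint a i j)
              (((huu i j).const_mul 2).add (integrable_const _)) hpt
        _ = 2*(∫ ω, ((X ω i a.1 - X ω i a.2) * (X ω j a.1 - X ω j a.2))^2 ∂P)
            + 8*(Sig i j)^2 := by
            rw [integral_add ((huu i j).const_mul 2) (integrable_const _),
              integral_const_mul, integral_const]
            simp
    have hsum_uu : ∑ i, ∑ j, ∫ ω, ((X ω i a.1 - X ω i a.2) * (X ω j a.1 - X ω j a.2))^2 ∂P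
        ≤ 16*(q:ℝ)^2*Real.sqrt K2 := by
      have hswap : ∑ i, ∑ j, ∫ ω, ((X ω i a.1 - X ω i a.2) * (X ω j a.1 - X ω j a.2))^2 ∂P
          = ∫ ω, ∑ i, ∑ j, ((X ω i a.1 - X ω i a.2) * (X ω j a.1 - X ω j a.2))^2 ∂P := by
        rw [integral_finset_sum _ (fun i _ => integrable_finset_sum _ (fun j _ => huu i j))]
        exact Finset.sum_congr rfl fun i _ =>
          (integral_finset_sum _ (fun j _ => huu i j)).symm
      rw [hswap]
      have hint4 : ∀ (k : Fin n), Integrable (fun ω => ∑ i, ((Γᵀ * X ω) i k)^4) P :=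
        fun k => integrable_finset_sum _ (fun i _ => (powfacts _ (hy8 i k)).2.2.2.1)
      have hpt : ∀ ω, ∑ i, ∑ j, ((X ω i a.1 - X ω i a.2) * (X ω j a.1 - X ω j a.2))^2
          ≤ 8*(q:ℝ)*(∑ i, ((Γᵀ * X ω) i a.1)^4) + 8*(q:ℝ)*(∑ i, ((Γᵀ * X ω) i a.2)^4) := by
        intro ω
        have h1 : ∑ i, ∑ j, ((X ω i a.1 - X ω i a.2) * (X ω j a.1 - X ω j a.2))^2
            = (∑ i, (X ω i a.1 - X ω i a.2)^2)^2 := by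
          rw [sq (∑ i, (X ω i a.1 - X ω i a.2)^2), Finset.sum_mul_sum]
          exact Finset.sum_congr rfl fun i _ => Finset.sum_congr rfl fun j _ => by ring
        have h2 : ∑ i, (X ω i a.1 - X ω i a.2)^2
            = ∑ i, ((Γᵀ * X ω) i a.1 - (Γᵀ * X ω) i a.2)^2 := by
          have ho := orth_sum_sq Γ hΓ1 (fun b => X ω b a.1 - X ω b a.2)
          rw [← ho]
          refine Finset.sum_congr rfl fun i _ => ?_
          rw [hyp i a.1 ω, hyp i a.2 ω, ← Finset.sum_sub_distrib]
          congr 1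
          exact Finset.sum_congr rfl fun b _ => by ring
        have h3 : ∑ i, ((Γᵀ * X ω) i a.1 - (Γᵀ * X ω) i a.2)^2
            ≤ 2*(∑ i, ((Γᵀ * X ω) i a.1)^2) + 2*(∑ i, ((Γᵀ * X ω) i a.2)^2) := by
          calc ∑ i, ((Γᵀ * X ω) i a.1 - (Γᵀ * X ω) i a.2)^2
              ≤ ∑ i, (2*((Γᵀ * X ω) i a.1)^2 + 2*((Γᵀ * X ω) i a.2)^2) :=
                Finset.sum_le_sum fun i _ => by
                  nlinarith [sq_nonneg ((Γᵀ * X ω) i a.1 + (Γᵀ * X ω) i a.2)]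
            _ = 2*(∑ i, ((Γᵀ * X ω) i a.1)^2) + 2*(∑ i, ((Γᵀ * X ω) i a.2)^2) := by
                rw [Finset.sum_add_distrib, ← Finset.mul_sum, ← Finset.mul_sum]
        have h4 : ∀ (k : Fin n), (∑ i, ((Γᵀ * X ω) i k)^2)^2
            ≤ (q:ℝ) * ∑ i, ((Γᵀ * X ω) i k)^4 := by
          intro k
          have h := sq_sum_le_card_mul_sum_sq
            (s := (Finset.univ : Finset (Fin q))) (f := fun i => ((Γᵀ * X ω) i k)^2)
          have hc : ((Finset.univ : Finset (Fin q)).card : ℝ) = q := by simp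
          have heq : ∀ i : Fin q, (((Γᵀ * X ω) i k)^2)^2 = ((Γᵀ * X ω) i k)^4 := by
            intro i; ring
          rw [Finset.sum_congr rfl fun i _ => heq i, hc] at h
          exact h
        have hs1 : (0:ℝ) ≤ ∑ i, ((Γᵀ * X ω) i a.1)^2 :=
          Finset.sum_nonneg fun i _ => sq_nonneg _
        have hs2 : (0:ℝ) ≤ ∑ i, ((Γᵀ * X ω) i a.2)^2 :=
          Finset.sum_nonneg fun i _ => sq_nonneg _
        have hs0 : (0:ℝ) ≤ ∑ i, ((Γᵀ * X ω) i a.1 - (Γᵀ * X ω) i a.2)^2 :=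
          Finset.sum_nonneg fun i _ => sq_nonneg _
        rw [h1, h2]
        have h5 : (∑ i, ((Γᵀ * X ω) i a.1 - (Γᵀ * X ω) i a.2)^2)^2
            ≤ (2*(∑ i, ((Γᵀ * X ω) i a.1)^2) + 2*(∑ i, ((Γᵀ * X ω) i a.2)^2))^2 :=
          pow_le_pow_left₀ hs0 h3 2
        nlinarith [h5, h4 a.1, h4 a.2,
          sq_nonneg ((∑ i, ((Γᵀ * X ω) i a.1)^2) - ∑ i, ((Γᵀ * X ω) i a.2)^2)]
      calc ∫ ω, ∑ i, ∑ j, ((X ω i a.1 - X ω i a.2) * (X ω j a.1 - X ω j a.2))^2 ∂P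
          ≤ ∫ ω, (8*(q:ℝ)*(∑ i, ((Γᵀ * X ω) i a.1)^4)
              + 8*(q:ℝ)*(∑ i, ((Γᵀ * X ω) i a.2)^4)) ∂P := by
            refine integral_mono_of_nonneg (Filter.Eventually.of_forall fun ω => ?_)
              (((hint4 a.1).const_mul _).add ((hint4 a.2).const_mul _))
              (Filter.Eventually.of_forall fun ω => hpt ω)
            positivity
        _ = 8*(q:ℝ)*(∑ i, ∫ ω, ((Γᵀ * X ω) i a.1)^4 ∂P)
            + 8*(q:ℝ)*(∑ i, ∫ ω, ((Γᵀ * X ω) i a.2)^4 ∂P) := by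
            have ia : Integrable (fun ω => 8*(q:ℝ)*(∑ i, ((Γᵀ * X ω) i a.1)^4)) P :=
              (hint4 a.1).const_mul _
            have ib : Integrable (fun ω => 8*(q:ℝ)*(∑ i, ((Γᵀ * X ω) i a.2)^4)) P :=
              (hint4 a.2).const_mul _
            rw [integral_add ia ib, integral_const_mul, integral_const_mul,
              integral_finset_sum _ (fun i _ => (powfacts _ (hy8 i a.1)).2.2.2.1),
              integral_finset_sum _ (fun i _ => (powfacts _ (hy8 i a.2)).2.2.2.1)]
        _ ≤ 8*(q:ℝ)*((q:ℝ)*Real.sqrt K2) + 8*(q:ℝ)*((q:ℝ)*Real.sqrt K2) := by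
            have g1 := hS4 a.1
            have g2 := hS4 a.2
            gcongr <;> first | exact g1 | exact g2 | positivity
        _ = 16*(q:ℝ)^2*Real.sqrt K2 := by ring
    calc ∑ i, ∑ j, ∫ ω, (Z a i j ω)^2 ∂P
        ≤ ∑ i, ∑ j, (2*(∫ ω, ((X ω i a.1 - X ω i a.2) * (X ω j a.1 - X ω j a.2))^2 ∂P)
            + 8*(Sig i j)^2) :=
          Finset.sum_le_sum fun i _ => Finset.sum_le_sum fun j _ => hZsqle i j
      _ = 2*(∑ i, ∑ j, ∫ ω, ((X ω i a.1 - X ω i a.2) * (X ω j a.1 - X ω j a.2))^2 ∂P)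
          + 8*(∑ i, ∑ j, (Sig i j)^2) := by
          calc ∑ i, ∑ j, (2*(∫ ω, ((X ω i a.1 - X ω i a.2) * (X ω j a.1 - X ω j a.2))^2 ∂P)
                + 8*(Sig i j)^2)
              = ∑ i, (2*(∑ j, ∫ ω, ((X ω i a.1 - X ω i a.2) * (X ω j a.1 - X ω j a.2))^2 ∂P)
                + 8*(∑ j, (Sig i j)^2)) :=
                Finset.sum_congr rfl fun i _ => by
                  rw [Finset.sum_add_distrib, ← Finset.mul_sum, ← Finset.mul_sum]
            _ = 2*(∑ i, ∑ j, ∫ ω, ((X ω i a.1 - X ω i a.2) * (X ω j a.1 - X ω j a.2))^2 ∂P)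
                + 8*(∑ i, ∑ j, (Sig i j)^2) := by
                rw [Finset.sum_add_distrib, ← Finset.mul_sum, ← Finset.mul_sum]
      _ ≤ 2*(16*(q:ℝ)^2*Real.sqrt K2) + 8*((q:ℝ)*Real.sqrt K2) := by
          have h1 := hsum_uu
          have h2 : ∑ i, ∑ j, (Sig i j)^2 ≤ (q:ℝ)*Real.sqrt K2 := by
            rw [hSig2]; exact hLsq
          linarith
      _ ≤ 40 * (q:ℝ)^2 * Real.sqrt K2 := by
          have hq1 : (1:ℝ) ≤ q := by exact_mod_cast hq
          have hqq : (q:ℝ)*Real.sqrt K2 ≤ (q:ℝ)^2*Real.sqrt K2 := by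
            have : (q:ℝ) ≤ (q:ℝ)^2 := by nlinarith [hq1]
            exact mul_le_mul_of_nonneg_right this hsK2
          linarith
  ------------------------------------------------------------------
  -- assembling β²
  have hTval : ∀ i j, ∫ ω, (sampleCov (X ω) i j - Sig i j)^2 ∂P
      = c^2 * ∑ a : Fin n × Fin n, ∑ b : Fin n × Fin n,
          ∫ ω, Z a i j ω * Z b i j ω ∂P := by
    intro i j
    have hrep : (fun ω => (sampleCov (X ω) i j - Sig i j)^2)
        = fun ω => c^2 * ∑ a : Fin n × Fin n, ∑ b : Fin n × Fin n,
            Z a i j ω * Z b i j ω := by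
      funext ω
      rw [hTid ω i j, mul_pow, sq (∑ a : Fin n × Fin n, Z a i j ω), Finset.sum_mul_sum]
    rw [hrep, integral_const_mul,
      integral_finset_sum _ (fun a _ => integrable_finset_sum _ (fun b _ => hZZint a b i j))]
    congr 1
    exact Finset.sum_congr rfl fun a _ =>
      integral_finset_sum _ (fun b _ => hZZint a b i j)
  have hTint : ∀ i j, Integrable (fun ω => (sampleCov (X ω) i j - Sig i j)^2) P := by
    intro i j
    have hrep : (fun ω => (sampleCov (X ω) i j - Sig i j)^2)
        = fun ω => c^2 * ∑ a : Fin n × Fin n, ∑ b : Fin n × Fin n,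
            Z a i j ω * Z b i j ω := by
      funext ω
      rw [hTid ω i j, mul_pow, sq (∑ a : Fin n × Fin n, Z a i j ω), Finset.sum_mul_sum]
    rw [hrep]
    exact (integrable_finset_sum _ (fun a _ =>
      integrable_finset_sum _ (fun b _ => hZZint a b i j))).const_mul _
  set Gm : ℝ := 40*(q:ℝ)^2*Real.sqrt K2 with hGm
  have hGmnn : 0 ≤ Gm := by positivity
  have hFbound : ∀ a b : Fin n × Fin n,
      ∑ i, ∑ j, ∫ ω, Z a i j ω * Z b i j ω ∂P ≤ Gm := by
    intro a b
    have hpt : ∀ i j, ∫ ω, Z a i j ω * Z b i j ω ∂P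
        ≤ ((∫ ω, (Z a i j ω)^2 ∂P) + ∫ ω, (Z b i j ω)^2 ∂P)/2 := by
      intro i j
      have hgint : Integrable (fun ω => ((Z a i j ω)^2 + (Z b i j ω)^2)/2) P :=
        ((hZsqint a i j).add (hZsqint b i j)).div_const 2
      have key : ∀ x y : ℝ, x*y ≤ (x^2 + y^2)/2 := fun x y => by
        nlinarith [sq_nonneg (x - y)]
      have hle : ∀ ω, Z a i j ω * Z b i j ω ≤ ((Z a i j ω)^2 + (Z b i j ω)^2)/2 :=
        fun ω => key _ _
      have h := integral_mono (hZZint a b i j) hgint hle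
      calc ∫ ω, Z a i j ω * Z b i j ω ∂P
          ≤ ∫ ω, ((Z a i j ω)^2 + (Z b i j ω)^2)/2 ∂P := h
        _ = ((∫ ω, (Z a i j ω)^2 ∂P) + ∫ ω, (Z b i j ω)^2 ∂P)/2 := by
            rw [integral_div]
            have hadd : Integrable (fun ω => (Z a i j ω)^2 + (Z b i j ω)^2) P :=
              (hZsqint a i j).add (hZsqint b i j)
            rw [integral_add (hZsqint a i j) (hZsqint b i j)]
    calc ∑ i, ∑ j, ∫ ω, Z a i j ω * Z b i j ω ∂P
        ≤ ∑ i, ∑ j, ((∫ ω, (Z a i j ω)^2 ∂P) + ∫ ω, (Z b i j ω)^2 ∂P)/2 :=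
          Finset.sum_le_sum fun i _ => Finset.sum_le_sum fun j _ => hpt i j
      _ = ((∑ i, ∑ j, ∫ ω, (Z a i j ω)^2 ∂P) + ∑ i, ∑ j, ∫ ω, (Z b i j ω)^2 ∂P)/2 := by
          calc ∑ i, ∑ j, ((∫ ω, (Z a i j ω)^2 ∂P) + ∫ ω, (Z b i j ω)^2 ∂P)/2
              = ∑ i, ((∑ j, ∫ ω, (Z a i j ω)^2 ∂P) + ∑ j, ∫ ω, (Z b i j ω)^2 ∂P)/2 :=
                Finset.sum_congr rfl fun i _ => by
                  rw [← Finset.sum_div, Finset.sum_add_distrib]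
            _ = ((∑ i, ∑ j, ∫ ω, (Z a i j ω)^2 ∂P) + ∑ i, ∑ j, ∫ ω, (Z b i j ω)^2 ∂P)/2 := by
                rw [← Finset.sum_div, Finset.sum_add_distrib]
      _ ≤ (Gm + Gm)/2 := by
          have h1 := hG a
          have h2 := hG b
          have hd : ((∑ i, ∑ j, ∫ ω, (Z a i j ω)^2 ∂P) + ∑ i, ∑ j, ∫ ω, (Z b i j ω)^2 ∂P)
              ≤ Gm + Gm := by rw [hGm]; linarith
          linarith
      _ = Gm := by ring
  have hFzero : ∀ a b : Fin n × Fin n,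
      (a.1 = a.2 ∨ b.1 = b.2 ∨ (a.1 ≠ b.1 ∧ a.1 ≠ b.2 ∧ a.2 ≠ b.1 ∧ a.2 ≠ b.2)) →
      ∑ i, ∑ j, ∫ ω, Z a i j ω * Z b i j ω ∂P = 0 := by
    intro a b h
    refine Finset.sum_eq_zero fun i _ => Finset.sum_eq_zero fun j _ => ?_
    rcases h with ha | hb | ⟨h1, h2, h3, h4⟩
    · have hz : (fun ω => Z a i j ω * Z b i j ω) = fun _ => (0:ℝ) :=
        funext fun ω => by rw [hdeg a i j ha ω, zero_mul]
      rw [hz, integral_zero]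
    · have hz : (fun ω => Z a i j ω * Z b i j ω) = fun _ => (0:ℝ) :=
        funext fun ω => by rw [hdeg b i j hb ω, mul_zero]
      rw [hz, integral_zero]
    · by_cases ha : a.1 = a.2
      · have hz : (fun ω => Z a i j ω * Z b i j ω) = fun _ => (0:ℝ) :=
          funext fun ω => by rw [hdeg a i j ha ω, zero_mul]
        rw [hz, integral_zero]
      · by_cases hb : b.1 = b.2
        · have hz : (fun ω => Z a i j ω * Z b i j ω) = fun _ => (0:ℝ) :=
            funext fun ω => by rw [hdeg b i j hb ω, mul_zero]
          rw [hz, integral_zero]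
        · exact hgoodint a b i j ha hb h1 h2 h3 h4
  have hper : ∀ a : Fin n × Fin n,
      ∑ b : Fin n × Fin n, ∑ i, ∑ j, ∫ ω, Z a i j ω * Z b i j ω ∂P
        ≤ (4*(n:ℝ)) * Gm := by
    intro a
    set F : Fin n × Fin n → ℝ := fun b => ∑ i, ∑ j, ∫ ω, Z a i j ω * Z b i j ω ∂P with hF
    set p : Fin n × Fin n → Prop := fun b =>
      (a.1 = a.2 ∨ b.1 = b.2 ∨ (a.1 ≠ b.1 ∧ a.1 ≠ b.2 ∧ a.2 ≠ b.1 ∧ a.2 ≠ b.2)) with hp'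
    have hsplit : ∑ b : Fin n × Fin n, F b
        = ∑ b ∈ Finset.univ.filter (fun b => ¬ p b), F b := by
      rw [← Finset.sum_filter_add_sum_filter_not Finset.univ (fun b => ¬ p b) F]
      have hzero : ∑ b ∈ Finset.univ.filter (fun b => ¬¬ p b), F b = 0 :=
        Finset.sum_eq_zero fun b hb =>
          hFzero a b (not_not.mp (Finset.mem_filter.mp hb).2)
      rw [hzero, add_zero]
    rw [hsplit]
    have hsub : Finset.univ.filter (fun b => ¬ p b)
        ⊆ (({a.1, a.2} : Finset (Fin n)) ×ˢ Finset.univ)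
          ∪ (Finset.univ ×ˢ ({a.1, a.2} : Finset (Fin n))) := by
      intro b hb
      have hnb : ¬ (a.1 = a.2 ∨ b.1 = b.2 ∨
          (a.1 ≠ b.1 ∧ a.1 ≠ b.2 ∧ a.2 ≠ b.1 ∧ a.2 ≠ b.2)) :=
        (Finset.mem_filter.mp hb).2
      push_neg at hnb
      obtain ⟨_, _, hnb3⟩ := hnb
      simp only [Finset.mem_union, Finset.mem_product, Finset.mem_insert,
        Finset.mem_singleton, Finset.mem_univ, and_true, true_and]
      by_cases e1 : a.1 = b.1
      · exact Or.inl (Or.inl e1.symm)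
      · by_cases e2 : a.1 = b.2
        · exact Or.inr (Or.inl e2.symm)
        · by_cases e3 : a.2 = b.1
          · exact Or.inl (Or.inr e3.symm)
          · exact Or.inr (Or.inr (hnb3 e1 e2 e3).symm)
    have hcard : ((Finset.univ.filter (fun b => ¬ p b)).card : ℝ) ≤ 4*(n:ℝ) := by
      have h1 : (Finset.univ.filter (fun b => ¬ p b)).card
          ≤ ((({a.1, a.2} : Finset (Fin n)) ×ˢ Finset.univ)
            ∪ (Finset.univ ×ˢ ({a.1, a.2} : Finset (Fin n)))).card :=
        Finset.card_le_card hsub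
      have h2 : ((({a.1, a.2} : Finset (Fin n)) ×ˢ Finset.univ)
            ∪ (Finset.univ ×ˢ ({a.1, a.2} : Finset (Fin n)))).card
          ≤ 2*n + 2*n := by
        calc ((({a.1, a.2} : Finset (Fin n)) ×ˢ Finset.univ)
              ∪ (Finset.univ ×ˢ ({a.1, a.2} : Finset (Fin n)))).card
            ≤ (({a.1, a.2} : Finset (Fin n)) ×ˢ (Finset.univ : Finset (Fin n))).card
              + ((Finset.univ : Finset (Fin n)) ×ˢ ({a.1, a.2} : Finset (Fin n))).card :=
              Finset.card_union_le _ _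
          _ ≤ 2*n + 2*n := by
              rw [Finset.card_product, Finset.card_product]
              have hs : ({a.1, a.2} : Finset (Fin n)).card ≤ 2 :=
                le_trans (Finset.card_insert_le _ _) (by simp)
              have hu : (Finset.univ : Finset (Fin n)).card = n := by simp
              rw [hu]
              have h3 := Nat.mul_le_mul hs (le_refl n)
              have h4 := Nat.mul_le_mul (le_refl n) hs
              omega
      calc ((Finset.univ.filter (fun b => ¬ p b)).card : ℝ)
          ≤ ((2*n + 2*n : ℕ) : ℝ) := by exact_mod_cast le_trans h1 h2
        _ = 4*(n:ℝ) := by push_cast; ring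
    calc ∑ b ∈ Finset.univ.filter (fun b => ¬ p b), F b
        ≤ ∑ b ∈ Finset.univ.filter (fun b => ¬ p b), Gm :=
          Finset.sum_le_sum fun b _ => hFbound a b
      _ = ((Finset.univ.filter (fun b => ¬ p b)).card : ℝ) * Gm := by
          rw [Finset.sum_const, nsmul_eq_mul]
      _ ≤ (4*(n:ℝ)) * Gm := mul_le_mul_of_nonneg_right hcard hGmnn
  have hkey : ∑ a : Fin n × Fin n, ∑ b : Fin n × Fin n,
      ∑ i, ∑ j, ∫ ω, Z a i j ω * Z b i j ω ∂P ≤ (n:ℝ)^2 * ((4*(n:ℝ)) * Gm) := by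
    calc ∑ a : Fin n × Fin n, ∑ b : Fin n × Fin n,
        ∑ i, ∑ j, ∫ ω, Z a i j ω * Z b i j ω ∂P
        ≤ ∑ _a : Fin n × Fin n, (4*(n:ℝ)) * Gm := Finset.sum_le_sum fun a _ => hper a
      _ = (n:ℝ)^2 * ((4*(n:ℝ)) * Gm) := by
          rw [Finset.sum_const, nsmul_eq_mul, Finset.card_univ]
          have hcd : ((Fintype.card (Fin n × Fin n) : ℕ) : ℝ) = (n:ℝ)^2 := by
            simp
            ring
          rw [hcd]
  have hbeta : beta2 P X Sig ≤ 160*K1*Real.sqrt K2 := by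
    have hb1 : beta2 P X Sig
        = (∑ i, ∑ j, ∫ ω, (sampleCov (X ω) i j - Sig i j)^2 ∂P)/q := by
      simp only [beta2]
      have hptw : ∀ ω, nrm (sampleCov (X ω) - Sig)^2
          = (∑ i, ∑ j, (sampleCov (X ω) i j - Sig i j)^2)/q := by
        intro ω
        rw [nrm_sq]
        congr 1 <;> simp [Matrix.sub_apply]
      simp_rw [hptw]
      rw [integral_div,
        integral_finset_sum _ (fun i _ => integrable_finset_sum _ (fun j _ => hTint i j))]
      congr 1
      exact Finset.sum_congr rfl fun i _ =>
        integral_finset_sum _ (fun j _ => hTint i j)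
    rw [hb1]
    have h2 : ∑ i, ∑ j, ∫ ω, (sampleCov (X ω) i j - Sig i j)^2 ∂P
        = c^2 * ∑ a : Fin n × Fin n, ∑ b : Fin n × Fin n,
            ∑ i, ∑ j, ∫ ω, Z a i j ω * Z b i j ω ∂P := by
      simp_rw [hTval, ← Finset.mul_sum]
      congr 1
      calc ∑ i, ∑ j, ∑ a : Fin n × Fin n, ∑ b : Fin n × Fin n,
            ∫ ω, Z a i j ω * Z b i j ω ∂P
          = ∑ i, ∑ a : Fin n × Fin n, ∑ j, ∑ b : Fin n × Fin n,
              ∫ ω, Z a i j ω * Z b i j ω ∂P :=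
            Finset.sum_congr rfl fun i _ => Finset.sum_comm
        _ = ∑ a : Fin n × Fin n, ∑ i, ∑ j, ∑ b : Fin n × Fin n,
              ∫ ω, Z a i j ω * Z b i j ω ∂P := Finset.sum_comm
        _ = ∑ a : Fin n × Fin n, ∑ i, ∑ b : Fin n × Fin n, ∑ j,
              ∫ ω, Z a i j ω * Z b i j ω ∂P :=
            Finset.sum_congr rfl fun a _ => Finset.sum_congr rfl fun i _ => Finset.sum_comm
        _ = ∑ a : Fin n × Fin n, ∑ b : Fin n × Fin n, ∑ i, ∑ j,
              ∫ ω, Z a i j ω * Z b i j ω ∂P :=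
            Finset.sum_congr rfl fun a _ => Finset.sum_comm
    have hqK : (q:ℝ) ≤ K1*n := by
      rw [div_le_iff₀ hn0] at hK1; linarith
    have hK1nn : 0 ≤ K1 := le_trans (by positivity) hK1
    have e1 : (n:ℝ)*q ≤ 4*((n:ℝ)-1)^2*K1 := by
      nlinarith [mul_le_mul_of_nonneg_left hqK hn0.le,
        mul_nonneg hK1nn (mul_nonneg (by linarith : (0:ℝ) ≤ (n:ℝ)-2)
          (by linarith : (0:ℝ) ≤ 3*(n:ℝ)-2))]
    have hApos : (0:ℝ) < (2*(n:ℝ)*((n:ℝ)-1))^2 := by positivity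
    calc (∑ i, ∑ j, ∫ ω, (sampleCov (X ω) i j - Sig i j)^2 ∂P)/q
        = (c^2 * ∑ a : Fin n × Fin n, ∑ b : Fin n × Fin n,
            ∑ i, ∑ j, ∫ ω, Z a i j ω * Z b i j ω ∂P)/q := by rw [h2]
      _ ≤ (c^2 * ((n:ℝ)^2 * ((4*(n:ℝ)) * Gm)))/q := by
          gcongr <;> first | exact hkey | exact sq_nonneg c | positivity
      _ ≤ 160*K1*Real.sqrt K2 := by
          rw [div_le_iff₀ hq0, hc, inv_pow, inv_mul_le_iff₀ hApos, hGm]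
          calc (n:ℝ)^2 * (4*(n:ℝ) * (40*(q:ℝ)^2*Real.sqrt K2))
              = 160*(n:ℝ)^2*(q:ℝ)*Real.sqrt K2*((n:ℝ)*(q:ℝ)) := by ring
            _ ≤ 160*(n:ℝ)^2*(q:ℝ)*Real.sqrt K2*(4*((n:ℝ)-1)^2*K1) :=
                mul_le_mul_of_nonneg_left e1 (by positivity)
            _ = (2*(n:ℝ)*((n:ℝ)-1))^2 * (160*K1*Real.sqrt K2*(q:ℝ)) := by ring
  ------------------------------------------------------------------
  -- δ² bound
  have hnrmint : Integrable (fun ω => nrm (sampleCov (X ω) - Sig)^2) P := by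
    have hrep : (fun ω => nrm (sampleCov (X ω) - Sig)^2)
        = fun ω => (∑ i, ∑ j, (sampleCov (X ω) i j - Sig i j)^2)/q := by
      funext ω
      rw [nrm_sq]
      congr 1 <;> simp [Matrix.sub_apply]
    rw [hrep]
    exact (integrable_finset_sum _ fun i _ =>
      integrable_finset_sum _ fun j _ => hTint i j).div_const _
  have hdelta : delta2 P X Sig ≤ 2*Real.sqrt K2 + 320*K1*Real.sqrt K2 := by
    simp only [delta2]
    have hptw : ∀ ω, nrm (sampleCov (X ω) - muS Sig • 1)^2
        ≤ 2*nrm (sampleCov (X ω) - Sig)^2 + 2*nrm (Sig - muS Sig • 1)^2 := by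
      intro ω
      rw [nrm_sq, nrm_sq, nrm_sq]
      have hterm : ∀ i j, ((sampleCov (X ω) - muS Sig • 1) i j)^2
          ≤ 2*((sampleCov (X ω) - Sig) i j)^2 + 2*((Sig - muS Sig • 1) i j)^2 := by
        intro i j
        have hsplit : (sampleCov (X ω) - muS Sig • 1) i j
            = (sampleCov (X ω) - Sig) i j + (Sig - muS Sig • 1) i j := by
          simp only [Matrix.sub_apply]
          ring
        rw [hsplit]
        nlinarith [sq_nonneg ((sampleCov (X ω) - Sig) i j - (Sig - muS Sig • 1) i j)]
      have hsum : ∑ i, ∑ j, ((sampleCov (X ω) - muS Sig • 1) i j)^2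
          ≤ 2*(∑ i, ∑ j, ((sampleCov (X ω) - Sig) i j)^2)
            + 2*(∑ i, ∑ j, ((Sig - muS Sig • 1) i j)^2) := by
        calc ∑ i, ∑ j, ((sampleCov (X ω) - muS Sig • 1) i j)^2
            ≤ ∑ i, ∑ j, (2*((sampleCov (X ω) - Sig) i j)^2
                + 2*((Sig - muS Sig • 1) i j)^2) :=
              Finset.sum_le_sum fun i _ => Finset.sum_le_sum fun j _ => hterm i j
          _ = 2*(∑ i, ∑ j, ((sampleCov (X ω) - Sig) i j)^2)
              + 2*(∑ i, ∑ j, ((Sig - muS Sig • 1) i j)^2) := by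
              rw [Finset.mul_sum, Finset.mul_sum, ← Finset.sum_add_distrib]
              refine Finset.sum_congr rfl fun i _ => ?_
              rw [Finset.sum_add_distrib, ← Finset.mul_sum, ← Finset.mul_sum]
      calc (∑ i, ∑ j, ((sampleCov (X ω) - muS Sig • 1) i j)^2)/q
          ≤ (2*(∑ i, ∑ j, ((sampleCov (X ω) - Sig) i j)^2)
              + 2*(∑ i, ∑ j, ((Sig - muS Sig • 1) i j)^2))/q :=
            (div_le_div_iff_of_pos_right hq0).mpr hsum
        _ = 2*((∑ i, ∑ j, ((sampleCov (X ω) - Sig) i j)^2)/q)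
            + 2*((∑ i, ∑ j, ((Sig - muS Sig • 1) i j)^2)/q) := by ring
    calc ∫ ω, nrm (sampleCov (X ω) - muS Sig • 1)^2 ∂P
        ≤ ∫ ω, (2*nrm (sampleCov (X ω) - Sig)^2 + 2*nrm (Sig - muS Sig • 1)^2) ∂P :=
          integral_mono_of_nonneg (Filter.Eventually.of_forall fun ω => sq_nonneg _)
            ((hnrmint.const_mul 2).add (integrable_const _))
            (Filter.Eventually.of_forall hptw)
      _ = 2*(∫ ω, nrm (sampleCov (X ω) - Sig)^2 ∂P) + 2*nrm (Sig - muS Sig • 1)^2 := by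
          rw [integral_add (hnrmint.const_mul 2) (integrable_const _), integral_const_mul,
            integral_const]
          simp
      _ = 2*beta2 P X Sig + 2*alpha2 Sig := rfl
      _ ≤ 2*(160*K1*Real.sqrt K2) + 2*Real.sqrt K2 := by linarith [hbeta, halpha]
      _ = 2*Real.sqrt K2 + 320*K1*Real.sqrt K2 := by ring
  exact ⟨hmu, halpha, hbeta, hdelta⟩

theorem stmt_1
    {Ω : Type*} [MeasurableSpace Ω] (P : Measure Ω) [IsProbabilityMeasure P]
    (p : ℕ → ℕ) (hp : ∀ n, 1 ≤ p n)
    (X : ∀ n, Ω → Matrix (Fin (p n)) (Fin n) ℝ)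
    (Sig : ∀ n, Matrix (Fin (p n)) (Fin (p n)) ℝ)
    (Γmat Λmat : ∀ n, Matrix (Fin (p n)) (Fin (p n)) ℝ)
    (hΓ : ∀ n, Γmat n * (Γmat n)ᵀ = 1 ∧ (Γmat n)ᵀ * Γmat n = 1)
    (hΛ : ∀ n, (Λmat n).IsDiag)
    (hdecomp : ∀ n, Sig n = Γmat n * Λmat n * (Γmat n)ᵀ)
    (hmeas : ∀ n, Measurable (X n))
    (hL8 : ∀ n (i : Fin (p n)) (k : Fin n), MemLp (fun ω => X n ω i k) 8 P)
    (hmean : ∀ n (i : Fin (p n)) (k : Fin n), ∫ ω, X n ω i k ∂P = 0)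
    (hcov : ∀ n (i j : Fin (p n)) (k : Fin n), ∫ ω, X n ω i k * X n ω j k ∂P = Sig n i j)
    (hindep : ∀ n, iIndepFun
      (fun (k : Fin n) (ω : Ω) (i : Fin (p n)) => X n ω i k) P)
    (hident : ∀ n (k k' : Fin n),
      IdentDistrib (fun ω (i : Fin (p n)) => X n ω i k)
        (fun ω (i : Fin (p n)) => X n ω i k') P P)
    (K1 : ℝ) (hK1 : ∀ n, (p n : ℝ) / n ≤ K1)
    (K2 : ℝ)
    (hK2 : ∀ n (k : Fin n), (∑ i, ∫ ω, (((Γmat n)ᵀ * X n ω) i k) ^ 8 ∂P) / p n ≤ K2)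
    :
    ∃ C : ℝ, ∀ n, 2 ≤ n →
      muS (Sig n) ≤ C ∧ alpha2 (Sig n) ≤ C ∧
      beta2 P (X n) (Sig n) ≤ C ∧ delta2 P (X n) (Sig n) ≤ C := by
  have hK1nn : 0 ≤ K1 := le_trans (by positivity) (hK1 1)
  refine ⟨Real.sqrt (Real.sqrt K2) + 2*Real.sqrt K2 + 480*K1*Real.sqrt K2, ?_⟩
  intro n hn
  obtain ⟨h1, h2, h3, h4⟩ := main_bounds P (hp n) hn (X n) (Sig n) (Γmat n) (Λmat n)
    (hΓ n).1 (hΓ n).2 (hΛ n) (hdecomp n) (hmeas n) (hL8 n) (hmean n) (hcov n) (hindep n)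
    K1 K2 (hK1 n) (hK2 n)
  have s1 : 0 ≤ Real.sqrt K2 := Real.sqrt_nonneg _
  have s2 : 0 ≤ Real.sqrt (Real.sqrt K2) := Real.sqrt_nonneg _
  have s3 : 0 ≤ K1*Real.sqrt K2 := mul_nonneg hK1nn s1
  exact ⟨by linarith, by linarith, by linarith, by linarith⟩

end LW
end
end
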